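/- arXiv:2010.10005 — 6 statements merged into one kernel-verified Lean document; each statement's English description precedes it below -/
import Mathlib

section
/- Let X ⊆ ℤ² and let V₁, …, V_n ⊆ X be thick convex digital disks with bounding curves C₁, …, C_n, and let X′ = ⋃_{i=1}^n V_i. For each i let A_{1,i} be the set of endpoints of the maximal horizontal and maximal vertical segments of C_i, and let A_{2,i} be the union of the maximal slanted segments of C_i. Then A = (X \ X′) ∪ ⋃_{i=1}^n (A_{1,i} ∪ A_{2,i}) is a freezing set for (X, c₁). -/
/-- Two points of `ℤ²` are `c_u`-adjacent: they are distinct, differ by at most 1 in each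
coordinate, and differ in at most `u` coordinates. -/
def adj2 (u : ℕ) (x y : ℤ × ℤ) : Prop :=
  x ≠ y ∧ |x.1 - y.1| ≤ 1 ∧ |x.2 - y.2| ≤ 1 ∧
    ((if x.1 = y.1 then 0 else 1) + (if x.2 = y.2 then 0 else 1) : ℕ) ≤ u

/-- `f` is `c_u`-continuous on `X ⊆ ℤ²`. -/
def DigContinuous2 (u : ℕ) (X : Set (ℤ × ℤ)) (f : ℤ × ℤ → ℤ × ℤ) : Prop :=
  ∀ x ∈ X, ∀ y ∈ X, adj2 u x y → f x = f y ∨ adj2 u (f x) (f y)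

/-- `A` is a freezing set for `(X, c_u)`: every `c_u`-continuous self-map of `X`
fixing `A` pointwise is the identity on `X`. -/
def FreezingSet2 (u : ℕ) (X A : Set (ℤ × ℤ)) : Prop :=
  A ⊆ X ∧ ∀ f : ℤ × ℤ → ℤ × ℤ, Set.MapsTo f X X → DigContinuous2 u X f →
    (∀ a ∈ A, f a = a) → ∀ x ∈ X, f x = x

/-- `A` is a minimal freezing set for `(X, c_u)`. -/
def MinFreezingSet2 (u : ℕ) (X A : Set (ℤ × ℤ)) : Prop :=
  FreezingSet2 u X A ∧ ∀ A' ⊂ A, ¬ FreezingSet2 u X A'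

/-- `q` is a close `c_u`-neighbor of `p` in `X`. -/
def CloseNbr2 (u : ℕ) (X : Set (ℤ × ℤ)) (p q : ℤ × ℤ) : Prop :=
  p ∈ X ∧ q ∈ X ∧ p ≠ q ∧ ∀ x ∈ X, adj2 u x p → x = q ∨ adj2 u x q

/-- A `c_u`-path of length `k` in `Y` from `a` to `b`. -/
def IsPathIn2 (u : ℕ) (Y : Set (ℤ × ℤ)) (k : ℕ) (s : Fin (k + 1) → ℤ × ℤ)
    (a b : ℤ × ℤ) : Prop :=
  (∀ i, s i ∈ Y) ∧ s 0 = a ∧ s (Fin.last k) = b ∧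
    ∀ i : Fin k, s i.castSucc = s i.succ ∨ adj2 u (s i.castSucc) (s i.succ)

/-- `Y` is `c_u`-connected. -/
def ConnectedIn2 (u : ℕ) (Y : Set (ℤ × ℤ)) : Prop :=
  ∀ a ∈ Y, ∀ b ∈ Y, ∃ k s, IsPathIn2 u Y k s a b

/-- `C` is a `c_u`-connected component of `Y`: a maximal `c_u`-connected subset. -/
def IsComponent2 (u : ℕ) (Y C : Set (ℤ × ℤ)) : Prop :=
  C ⊆ Y ∧ C.Nonempty ∧ ConnectedIn2 u C ∧
    ∀ C', C ⊆ C' → C' ⊆ Y → ConnectedIn2 u C' → C' = C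

/-- `S` is a digital `c₂`-closed curve: the trace of an injective cyclic `c₂`-path. -/
def IsClosedCurve2 (S : Set (ℤ × ℤ)) : Prop :=
  ∃ m : ℕ, 0 < m ∧ ∃ s : ZMod m → ℤ × ℤ, Function.Injective s ∧ Set.range s = S ∧
    ∀ i, s i = s (i + 1) ∨ adj2 2 (s i) (s (i + 1))

/-- `S` is a bounding curve of the digital disk `D`: `S` is a `c₂`-closed curve,
`ℤ² \ S` has exactly two `c₁`-components, one finite (the interior `I`) and one
infinite, and `D = S ∪ I`. -/
def IsBoundingCurve (S D : Set (ℤ × ℤ)) : Prop :=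
  IsClosedCurve2 S ∧ ∃ I E : Set (ℤ × ℤ), I ≠ E ∧ I.Finite ∧ E.Infinite ∧
    {C | IsComponent2 1 Sᶜ C} = {I, E} ∧ D = S ∪ I

/-- A digital line segment: a `c₂`-connected set of two or more collinear points. -/
def IsSegment2 (T : Set (ℤ × ℤ)) : Prop :=
  ConnectedIn2 2 T ∧ (∃ p ∈ T, ∃ q ∈ T, p ≠ q) ∧
    ∃ a b c : ℤ, ¬(a = 0 ∧ b = 0) ∧ ∀ p ∈ T, a * p.1 + b * p.2 = c

/-- A horizontal digital line segment. -/
def HorizSeg (T : Set (ℤ × ℤ)) : Prop := IsSegment2 T ∧ ∀ p ∈ T, ∀ q ∈ T, p.2 = q.2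

/-- A vertical digital line segment. -/
def VertSeg (T : Set (ℤ × ℤ)) : Prop := IsSegment2 T ∧ ∀ p ∈ T, ∀ q ∈ T, p.1 = q.1

/-- A slanted digital line segment (slope `1` or `-1`). -/
def SlantSeg (T : Set (ℤ × ℤ)) : Prop := IsSegment2 T ∧
  ((∀ p ∈ T, ∀ q ∈ T, p.1 - q.1 = p.2 - q.2) ∨ (∀ p ∈ T, ∀ q ∈ T, p.1 - q.1 = -(p.2 - q.2)))

/-- `T` is a maximal horizontal segment of the curve `S`. -/
def MaxHorizSegOf (S T : Set (ℤ × ℤ)) : Prop :=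
  T ⊆ S ∧ HorizSeg T ∧ ∀ T', T ⊆ T' → T' ⊆ S → HorizSeg T' → T' = T

/-- `T` is a maximal vertical segment of the curve `S`. -/
def MaxVertSegOf (S T : Set (ℤ × ℤ)) : Prop :=
  T ⊆ S ∧ VertSeg T ∧ ∀ T', T ⊆ T' → T' ⊆ S → VertSeg T' → T' = T

/-- `T` is a maximal slanted segment of the curve `S`. -/
def MaxSlantSegOf (S T : Set (ℤ × ℤ)) : Prop :=
  T ⊆ S ∧ SlantSeg T ∧ ∀ T', T ⊆ T' → T' ⊆ S → SlantSeg T' → T' = T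

/-- `p` is an endpoint of the segment `T`: it has at most one `c₂`-neighbor in `T`. -/
def IsEndpointOf (T : Set (ℤ × ℤ)) (p : ℤ × ℤ) : Prop :=
  p ∈ T ∧ {q ∈ T | adj2 2 p q}.Subsingleton

/-- The canonical embedding `ℤ² → ℝ²`. -/
def toR2 (p : ℤ × ℤ) : ℝ × ℝ := ((p.1 : ℝ), (p.2 : ℝ))

/-- `D` is digitally convex: `D = H ∩ ℤ²`, where `H` is the convex hull of `D` in `ℝ²`. -/
def DigitallyConvex (D : Set (ℤ × ℤ)) : Prop :=
  ∀ p : ℤ × ℤ, toR2 p ∈ convexHull ℝ (toR2 '' D) → p ∈ D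

/-- A unit horizontal or vertical direction. -/
def isAxisDir (d : ℤ × ℤ) : Prop := (|d.1| = 1 ∧ d.2 = 0) ∨ (d.1 = 0 ∧ |d.2| = 1)

/-- A unit diagonal direction. -/
def isDiagDir (d : ℤ × ℤ) : Prop := |d.1| = 1 ∧ |d.2| = 1

def dot2 (d e : ℤ × ℤ) : ℤ := d.1 * e.1 + d.2 * e.2

/-- `e` is a king-move direction lying strictly inside the angle (of measure less than
180°) with side directions `d₁` and `d₂`. -/
def InSector (d₁ d₂ e : ℤ × ℤ) : Prop :=
  (isAxisDir e ∨ isDiagDir e) ∧ 0 ≤ dot2 e d₁ ∧ 0 ≤ dot2 e d₂ ∧ e ≠ d₁ ∧ e ≠ d₂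

/-- `c` lies strictly on the same side of the line through `T` as some point of `I`. -/
def InteriorSideOf (T I : Set (ℤ × ℤ)) (c : ℤ × ℤ) : Prop :=
  ∃ a b k : ℤ, (∀ q ∈ T, a * q.1 + b * q.2 = k) ∧ k < a * c.1 + b * c.2 ∧
    ∃ w ∈ I, k < a * w.1 + b * w.2

/-- `X` is thick with respect to its bounding curve `S` (whose interior is `X \ S`):
(i) every non-endpoint `p` of a maximal slanted segment of `S` has a point `c ∈ X`,
`c₂`- but not `c₁`-adjacent to `p`, on the interior side of the segment;
(ii) every vertex of a 90° interior angle of `S` with horizontal and vertical sides has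
a point of the interior `c₂`- but not `c₁`-adjacent to it, and every vertex of a 90°
interior angle with slanted sides has a point of the interior `c₁`-adjacent to it;
(iii) every vertex `p` of a 135° interior angle of `S` has points `b, b' ∈ X` inside the
angle with `b` `c₂`- but not `c₁`-adjacent to `p` and `b'` `c₁`-adjacent to `p`.
A vertex with side directions `d₁, d₂` has an interior angle (of measure < 180°)
when some king direction strictly inside the angle leads into `X`. -/
def ThickWRT (X S : Set (ℤ × ℤ)) : Prop :=
  (∀ T, MaxSlantSegOf S T → ∀ p ∈ T, ¬IsEndpointOf T p →
      ∃ c ∈ X, adj2 2 c p ∧ ¬adj2 1 c p ∧ InteriorSideOf T (X \ S) c) ∧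
  ∃ m : ℕ, 0 < m ∧ ∃ s : ZMod m → ℤ × ℤ, Function.Injective s ∧ Set.range s = S ∧
    (∀ i, s i = s (i + 1) ∨ adj2 2 (s i) (s (i + 1))) ∧
    ∀ i : ZMod m,
      (isAxisDir (s (i - 1) - s i) ∧ isAxisDir (s (i + 1) - s i) ∧
          dot2 (s (i - 1) - s i) (s (i + 1) - s i) = 0 ∧
          (∃ e, InSector (s (i - 1) - s i) (s (i + 1) - s i) e ∧ s i + e ∈ X) →
        ∃ q ∈ X \ S, adj2 2 q (s i) ∧ ¬adj2 1 q (s i)) ∧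
      (isDiagDir (s (i - 1) - s i) ∧ isDiagDir (s (i + 1) - s i) ∧
          dot2 (s (i - 1) - s i) (s (i + 1) - s i) = 0 ∧
          (∃ e, InSector (s (i - 1) - s i) (s (i + 1) - s i) e ∧ s i + e ∈ X) →
        ∃ q ∈ X \ S, adj2 1 q (s i)) ∧
      (((isAxisDir (s (i - 1) - s i) ∧ isDiagDir (s (i + 1) - s i)) ∨
          (isDiagDir (s (i - 1) - s i) ∧ isAxisDir (s (i + 1) - s i))) ∧
          dot2 (s (i - 1) - s i) (s (i + 1) - s i) = -1 ∧
          (∃ e, InSector (s (i - 1) - s i) (s (i + 1) - s i) e ∧ s i + e ∈ X) →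
        ∃ b b' : ℤ × ℤ, InSector (s (i - 1) - s i) (s (i + 1) - s i) b ∧
          InSector (s (i - 1) - s i) (s (i + 1) - s i) b' ∧
          s i + b ∈ X ∧ s i + b' ∈ X ∧
          adj2 2 (s i + b) (s i) ∧ ¬adj2 1 (s i + b) (s i) ∧ adj2 1 (s i + b') (s i))

namespace CornersAux

lemma adj2_symm {u : ℕ} {x y : ℤ × ℤ} (h : adj2 u x y) : adj2 u y x := by
  obtain ⟨h1, h2, h3, h4⟩ := h
  refine ⟨Ne.symm h1, ?_, ?_, ?_⟩
  · rwa [abs_sub_comm]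
  · rwa [abs_sub_comm]
  · convert h4 using 2 <;> simp [eq_comm]

def Step (u : ℕ) (Y : Set (ℤ × ℤ)) (x y : ℤ × ℤ) : Prop := y ∈ Y ∧ adj2 u x y

def Reach (u : ℕ) (Y : Set (ℤ × ℤ)) : ℤ × ℤ → ℤ × ℤ → Prop :=
  Relation.ReflTransGen (Step u Y)

lemma path_cons {u : ℕ} {Y : Set (ℤ × ℤ)} {k : ℕ} {s : Fin (k + 1) → ℤ × ℤ} {a b c : ℤ × ℤ}
    (ha : a ∈ Y) (hab : a = b ∨ adj2 u a b) (hp : IsPathIn2 u Y k s b c) :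
    IsPathIn2 u Y (k + 1) (Fin.cons a s) a c := by
  obtain ⟨hmem, h0, hl, hstep⟩ := hp
  refine ⟨?_, ?_, ?_, ?_⟩
  · intro i
    refine Fin.cases ?_ ?_ i
    · simpa using ha
    · intro j; simpa using hmem j
  · simp
  · rw [show (Fin.last (k+1)) = (Fin.last k).succ from rfl]
    simpa using hl
  · intro i
    refine Fin.cases ?_ ?_ i
    · have : (Fin.cons a s : Fin (k+2) → ℤ × ℤ) (0 : Fin (k+1)).succ = s 0 := by simp
      simp only [Fin.castSucc_zero, Fin.cons_zero, this, h0]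
      exact hab
    · intro j
      have e1 : (j.succ : Fin (k+1)).castSucc = (j.castSucc).succ := rfl
      have e2 : ((j.succ : Fin (k+1)).succ) = (j.succ).succ := rfl
      rw [e1, e2, Fin.cons_succ, Fin.cons_succ]
      exact hstep j

lemma path_singleton {u : ℕ} {Y : Set (ℤ × ℤ)} {a : ℤ × ℤ} (ha : a ∈ Y) :
    IsPathIn2 u Y 0 (fun _ => a) a a :=
  ⟨fun _ => ha, rfl, rfl, fun i => i.elim0⟩

lemma reach_to_path {u : ℕ} {Y : Set (ℤ × ℤ)} {a b : ℤ × ℤ} (ha : a ∈ Y)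
    (h : Reach u Y a b) : ∃ k s, IsPathIn2 u Y k s a b := by
  induction h using Relation.ReflTransGen.head_induction_on with
  | refl => exact ⟨0, fun _ => b, path_singleton ha⟩
  | head hstep _ ih =>
    rename_i x y _
    obtain ⟨k, s, hp⟩ := ih hstep.1
    exact ⟨k + 1, Fin.cons x s, path_cons ha (Or.inr hstep.2) hp⟩

lemma path_to_reach {u : ℕ} {Y : Set (ℤ × ℤ)} :
    ∀ {k : ℕ} {s : Fin (k + 1) → ℤ × ℤ} {a b : ℤ × ℤ},
      IsPathIn2 u Y k s a b → Reach u Y a b := by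
  intro k
  induction k with
  | zero =>
    intro s a b hp
    obtain ⟨_, h0, hl, _⟩ := hp
    rw [show (Fin.last 0) = 0 from rfl] at hl
    rw [← h0, ← hl]
    exact Relation.ReflTransGen.refl
  | succ k ih =>
    intro s a b hp
    obtain ⟨hmem, h0, hl, hstep⟩ := hp
    have tail : IsPathIn2 u Y k (fun j => s j.succ) (s 1) b := by
      refine ⟨fun i => hmem _, by simp [Fin.succ_zero_eq_one], ?_, ?_⟩
      · show s (Fin.last k).succ = b
        rw [Fin.succ_last]; exact hl
      · intro i
        exact hstep i.succ
    have h1 : a = s 1 ∨ Step u Y a (s 1) := by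
      have := hstep 0
      rw [Fin.castSucc_zero, h0, Fin.succ_zero_eq_one] at this
      rcases this with h | h
      · exact Or.inl h
      · exact Or.inr ⟨hmem 1, h⟩
    rcases h1 with h | h
    · rw [h]; exact ih tail
    · exact Relation.ReflTransGen.head h (ih tail)

lemma reach_mono {u : ℕ} {Y Y' : Set (ℤ × ℤ)} (hYY : Y ⊆ Y') {a b : ℤ × ℤ}
    (h : Reach u Y a b) : Reach u Y' a b :=
  Relation.ReflTransGen.mono (p := Step u Y') (fun _ _ hs => ⟨hYY hs.1, hs.2⟩) a b h

lemma connectedIn_of_reach {u : ℕ} {Y : Set (ℤ × ℤ)}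
    (h : ∀ a ∈ Y, ∀ b ∈ Y, Reach u Y a b) : ConnectedIn2 u Y :=
  fun a ha b hb => reach_to_path ha (h a ha b hb)

lemma reach_of_connected {u : ℕ} {Y : Set (ℤ × ℤ)} (h : ConnectedIn2 u Y)
    {a b : ℤ × ℤ} (ha : a ∈ Y) (hb : b ∈ Y) : Reach u Y a b := by
  obtain ⟨k, s, hp⟩ := h a ha b hb
  exact path_to_reach hp

lemma exists_component {u : ℕ} {Y : Set (ℤ × ℤ)} {y : ℤ × ℤ} (hy : y ∈ Y) :
    ∃ Cc, IsComponent2 u Y Cc ∧ y ∈ Cc := by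
  set U := ⋃₀ {C : Set (ℤ × ℤ) | C ⊆ Y ∧ y ∈ C ∧ ConnectedIn2 u C} with hU
  have hmemU : ∀ x : ℤ × ℤ, x ∈ U ↔
      ∃ C, (C ⊆ Y ∧ y ∈ C ∧ ConnectedIn2 u C) ∧ x ∈ C := by
    intro x; rw [hU]; exact Set.mem_sUnion
  have hsing : ({y} : Set (ℤ × ℤ)) ∈ {C : Set (ℤ × ℤ) | C ⊆ Y ∧ y ∈ C ∧ ConnectedIn2 u C} := by
    refine ⟨by simpa using hy, rfl, ?_⟩
    intro a ha b hb
    simp only [Set.mem_singleton_iff] at ha hb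
    rw [ha, hb]
    exact ⟨0, fun _ => y, path_singleton rfl⟩
  have hyU : y ∈ U := (hmemU y).mpr ⟨{y}, hsing, rfl⟩
  have hUY : U ⊆ Y := by
    rintro x hx
    obtain ⟨C, ⟨hCY, _, _⟩, hx⟩ := (hmemU x).mp hx
    exact hCY hx
  have hUconn : ConnectedIn2 u U := by
    apply connectedIn_of_reach
    intro a ha b hb
    obtain ⟨Ca, ⟨hCaY, hyCa, hCac⟩, haCa⟩ := (hmemU a).mp ha
    obtain ⟨Cb, ⟨hCbY, hyCb, hCbc⟩, hbCb⟩ := (hmemU b).mp hb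
    have r1 : Reach u U a y := reach_mono
      (fun x hx => (hmemU x).mpr ⟨Ca, ⟨hCaY, hyCa, hCac⟩, hx⟩)
      (reach_of_connected hCac haCa hyCa)
    have r2 : Reach u U y b := reach_mono
      (fun x hx => (hmemU x).mpr ⟨Cb, ⟨hCbY, hyCb, hCbc⟩, hx⟩)
      (reach_of_connected hCbc hyCb hbCb)
    exact r1.trans r2
  refine ⟨U, ⟨hUY, ⟨y, hyU⟩, hUconn, ?_⟩, hyU⟩
  intro C' hUC' hC'Y hC'conn
  apply Set.Subset.antisymm _ hUC'
  intro x hx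
  exact (hmemU x).mpr ⟨C', ⟨hC'Y, hUC' hyU, hC'conn⟩, hx⟩

lemma component_absorb {u : ℕ} {Y Cc : Set (ℤ × ℤ)} (hC : IsComponent2 u Y Cc)
    {z : ℤ × ℤ} (hzY : z ∈ Y) (hadj : ∃ w ∈ Cc, adj2 u z w) : z ∈ Cc := by
  obtain ⟨hCY, _, hCconn, hmax⟩ := hC
  obtain ⟨w, hwC, hzw⟩ := hadj
  have hsub : Cc ⊆ Cc ∪ {z} := Set.subset_union_left
  have key : Cc ∪ {z} = Cc := by
    apply hmax
    · exact hsub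
    · rintro x (hx | hx)
      · exact hCY hx
      · simp only [Set.mem_singleton_iff] at hx; subst hx; exact hzY
    · apply connectedIn_of_reach
      have hwU : w ∈ Cc ∪ {z} := Or.inl hwC
      have rCc : ∀ a ∈ Cc, ∀ b ∈ Cc, Reach u (Cc ∪ {z}) a b := fun a ha b hb =>
        reach_mono hsub (reach_of_connected hCconn ha hb)
      have rzw : Reach u (Cc ∪ {z}) z w :=
        Relation.ReflTransGen.single ⟨hwU, hzw⟩
      have rwz : Reach u (Cc ∪ {z}) w z :=
        Relation.ReflTransGen.single ⟨Or.inr rfl, adj2_symm hzw⟩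
      rintro a (ha | ha) b (hb | hb)
      · exact rCc a ha b hb
      · simp only [Set.mem_singleton_iff] at hb; subst hb
        exact (rCc a ha w hwC).trans rwz
      · simp only [Set.mem_singleton_iff] at ha; subst ha
        exact rzw.trans (rCc w hwC b hb)
      · simp only [Set.mem_singleton_iff] at ha hb; subst ha; subst hb
        exact Relation.ReflTransGen.refl
  rw [← key]
  exact Or.inr rfl

lemma adj2_fst_sub {u : ℕ} {x y : ℤ × ℤ} (h : adj2 u x y) : |x.1 - y.1| ≤ 1 := h.2.1
lemma adj2_snd_sub {u : ℕ} {x y : ℤ × ℤ} (h : adj2 u x y) : |x.2 - y.2| ≤ 1 := h.2.2.1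

lemma adj2_one_snd_eq {x y : ℤ × ℤ} (h : adj2 1 x y) (hne : x.1 ≠ y.1) : x.2 = y.2 := by
  obtain ⟨_, _, _, h4⟩ := h
  by_contra hne2
  rw [if_neg hne, if_neg hne2] at h4
  omega

lemma adj2_one_fst_eq {x y : ℤ × ℤ} (h : adj2 1 x y) (hne : x.2 ≠ y.2) : x.1 = y.1 := by
  obtain ⟨_, _, _, h4⟩ := h
  by_contra hne2
  rw [if_neg hne2, if_neg hne] at h4
  omega

lemma step_fst_bound {u : ℕ} {Y : Set (ℤ × ℤ)} {k : ℕ} {s : Fin (k + 1) → ℤ × ℤ}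
    {a b : ℤ × ℤ} (hp : IsPathIn2 u Y k s a b) (i : Fin k) :
    |(s i.succ).1 - (s i.castSucc).1| ≤ 1 ∧ |(s i.succ).2 - (s i.castSucc).2| ≤ 1 := by
  rcases hp.2.2.2 i with h | h
  · rw [h]; simp
  · exact ⟨by have := adj2_fst_sub h; rw [abs_sub_comm] at this; exact this,
      by have := adj2_snd_sub h; rw [abs_sub_comm] at this; exact this⟩

lemma path_rigid_horiz {Y : Set (ℤ × ℤ)} {k : ℕ} {s : Fin (k + 1) → ℤ × ℤ}
    {a b : ℤ × ℤ} (hp : IsPathIn2 1 Y k s a b) (hk : b.1 - a.1 = (k : ℤ)) :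
    ∀ j : Fin (k + 1), s j = (a.1 + (j : ℕ), a.2) := by
  obtain ⟨hmem, h0, hl, hstep⟩ := hp
  have claim1 : ∀ j : Fin (k + 1), (s j).1 - a.1 ≤ ((j : ℕ) : ℤ) := by
    intro j
    induction j using Fin.induction with
    | zero => simp [h0]
    | succ i ih =>
      have hb := (step_fst_bound ⟨hmem, h0, hl, hstep⟩ i).1
      have e1 : ((i.castSucc : Fin (k+1)) : ℕ) = (i : ℕ) := rfl
      have e2 : ((i.succ : Fin (k+1)) : ℕ) = (i : ℕ) + 1 := rfl
      rw [e1] at ih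
      rw [e2]
      have hb' := abs_le.mp hb
      push_cast
      push_cast at ih
      omega
  have claim2 : ∀ j : Fin (k + 1), b.1 - (s j).1 ≤ (k : ℤ) - ((j : ℕ) : ℤ) := by
    intro j
    induction j using Fin.reverseInduction with
    | last => simp [hl]
    | cast i ih =>
      have hb := (step_fst_bound ⟨hmem, h0, hl, hstep⟩ i).1
      have e1 : ((i.castSucc : Fin (k+1)) : ℕ) = (i : ℕ) := rfl
      have e2 : ((i.succ : Fin (k+1)) : ℕ) = (i : ℕ) + 1 := rfl
      rw [e2] at ih
      rw [e1]
      have hik : (i : ℕ) < k := i.isLt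
      have hb' := abs_le.mp hb
      push_cast at ih ⊢
      omega
  have eq1 : ∀ j : Fin (k + 1), (s j).1 = a.1 + ((j : ℕ) : ℤ) := by
    intro j
    have c1 := claim1 j
    have c2 := claim2 j
    omega
  have eq2 : ∀ j : Fin (k + 1), (s j).2 = a.2 := by
    intro j
    induction j using Fin.induction with
    | zero => simp [h0]
    | succ i ih =>
      have e1 : ((i.castSucc : Fin (k+1)) : ℕ) = (i : ℕ) := rfl
      have e2 : ((i.succ : Fin (k+1)) : ℕ) = (i : ℕ) + 1 := rfl
      have hne : (s i.castSucc).1 ≠ (s i.succ).1 := by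
        rw [eq1 i.castSucc, eq1 i.succ, e1, e2]
        push_cast
        omega
      rcases hstep i with h | h
      · exact absurd (congrArg Prod.fst h) hne
      · rw [← adj2_one_snd_eq h hne]
        exact ih
  intro j
  exact Prod.ext (eq1 j) (eq2 j)

lemma path_rigid_vert {Y : Set (ℤ × ℤ)} {k : ℕ} {s : Fin (k + 1) → ℤ × ℤ}
    {a b : ℤ × ℤ} (hp : IsPathIn2 1 Y k s a b) (hk : b.2 - a.2 = (k : ℤ)) :
    ∀ j : Fin (k + 1), s j = (a.1, a.2 + (j : ℕ)) := by
  obtain ⟨hmem, h0, hl, hstep⟩ := hp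
  have claim1 : ∀ j : Fin (k + 1), (s j).2 - a.2 ≤ ((j : ℕ) : ℤ) := by
    intro j
    induction j using Fin.induction with
    | zero => simp [h0]
    | succ i ih =>
      have hb := (step_fst_bound ⟨hmem, h0, hl, hstep⟩ i).2
      have e1 : ((i.castSucc : Fin (k+1)) : ℕ) = (i : ℕ) := rfl
      have e2 : ((i.succ : Fin (k+1)) : ℕ) = (i : ℕ) + 1 := rfl
      rw [e1] at ih
      rw [e2]
      have hb' := abs_le.mp hb
      push_cast
      push_cast at ih
      omega
  have claim2 : ∀ j : Fin (k + 1), b.2 - (s j).2 ≤ (k : ℤ) - ((j : ℕ) : ℤ) := by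
    intro j
    induction j using Fin.reverseInduction with
    | last => simp [hl]
    | cast i ih =>
      have hb := (step_fst_bound ⟨hmem, h0, hl, hstep⟩ i).2
      have e1 : ((i.castSucc : Fin (k+1)) : ℕ) = (i : ℕ) := rfl
      have e2 : ((i.succ : Fin (k+1)) : ℕ) = (i : ℕ) + 1 := rfl
      rw [e2] at ih
      rw [e1]
      have hik : (i : ℕ) < k := i.isLt
      have hb' := abs_le.mp hb
      push_cast at ih ⊢
      omega
  have eq1 : ∀ j : Fin (k + 1), (s j).2 = a.2 + ((j : ℕ) : ℤ) := by
    intro j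
    have c1 := claim1 j
    have c2 := claim2 j
    omega
  have eq2 : ∀ j : Fin (k + 1), (s j).1 = a.1 := by
    intro j
    induction j using Fin.induction with
    | zero => simp [h0]
    | succ i ih =>
      have e1 : ((i.castSucc : Fin (k+1)) : ℕ) = (i : ℕ) := rfl
      have e2 : ((i.succ : Fin (k+1)) : ℕ) = (i : ℕ) + 1 := rfl
      have hne : (s i.castSucc).2 ≠ (s i.succ).2 := by
        rw [eq1 i.castSucc, eq1 i.succ, e1, e2]
        push_cast
        omega
      rcases hstep i with h | h
      · exact absurd (congrArg Prod.snd h) hne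
      · rw [← adj2_one_fst_eq h hne]
        exact ih
  intro j
  exact Prod.ext (eq2 j) (eq1 j)

lemma path_intermediate_fst {u : ℕ} {Y : Set (ℤ × ℤ)} {k : ℕ} {s : Fin (k + 1) → ℤ × ℤ}
    {a b : ℤ × ℤ} (hp : IsPathIn2 u Y k s a b) {x : ℤ}
    (hax : a.1 ≤ x) (hxb : x ≤ b.1) : ∃ j : Fin (k + 1), (s j).1 = x := by
  obtain ⟨hmem, h0, hl, hstep⟩ := hp
  classical
  set J : Finset (Fin (k + 1)) := Finset.univ.filter (fun j => (s j).1 ≤ x) with hJ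
  have h0J : (0 : Fin (k + 1)) ∈ J := by
    simp [hJ, h0, hax]
  have hne : J.Nonempty := ⟨0, h0J⟩
  set j0 := J.max' hne with hj0
  have hj0J : j0 ∈ J := J.max'_mem hne
  have hj0le : (s j0).1 ≤ x := by
    simpa [hJ] using hj0J
  by_cases hlast : j0 = Fin.last k
  · refine ⟨j0, ?_⟩
    rw [hlast, hl] at hj0le ⊢
    omega
  · obtain ⟨i, hi⟩ : ∃ i : Fin k, i.castSucc = j0 := by
      exact Fin.exists_castSucc_eq.mpr hlast
    have hsuccJ : i.succ ∉ J := by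
      intro hmemJ
      have : i.succ ≤ j0 := J.le_max' _ hmemJ
      rw [← hi] at this
      exact absurd this (not_le.mpr (Fin.castSucc_lt_succ (i := i)))
    have hgt : x < (s i.succ).1 := by
      by_contra hle
      exact hsuccJ (by simp [hJ]; omega)
    have hb' := abs_le.mp (step_fst_bound ⟨hmem, h0, hl, hstep⟩ i).1
    refine ⟨j0, ?_⟩
    rw [← hi] at hj0le ⊢
    omega

lemma path_intermediate_snd {u : ℕ} {Y : Set (ℤ × ℤ)} {k : ℕ} {s : Fin (k + 1) → ℤ × ℤ}
    {a b : ℤ × ℤ} (hp : IsPathIn2 u Y k s a b) {x : ℤ}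
    (hax : a.2 ≤ x) (hxb : x ≤ b.2) : ∃ j : Fin (k + 1), (s j).2 = x := by
  obtain ⟨hmem, h0, hl, hstep⟩ := hp
  classical
  set J : Finset (Fin (k + 1)) := Finset.univ.filter (fun j => (s j).2 ≤ x) with hJ
  have h0J : (0 : Fin (k + 1)) ∈ J := by
    simp [hJ, h0, hax]
  have hne : J.Nonempty := ⟨0, h0J⟩
  set j0 := J.max' hne with hj0
  have hj0J : j0 ∈ J := J.max'_mem hne
  have hj0le : (s j0).2 ≤ x := by
    simpa [hJ] using hj0J
  by_cases hlast : j0 = Fin.last k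
  · refine ⟨j0, ?_⟩
    rw [hlast, hl] at hj0le ⊢
    omega
  · obtain ⟨i, hi⟩ : ∃ i : Fin k, i.castSucc = j0 := by
      exact Fin.exists_castSucc_eq.mpr hlast
    have hsuccJ : i.succ ∉ J := by
      intro hmemJ
      have : i.succ ≤ j0 := J.le_max' _ hmemJ
      rw [← hi] at this
      exact absurd this (not_le.mpr (Fin.castSucc_lt_succ (i := i)))
    have hgt : x < (s i.succ).2 := by
      by_contra hle
      exact hsuccJ (by simp [hJ]; omega)
    have hb' := abs_le.mp (step_fst_bound ⟨hmem, h0, hl, hstep⟩ i).2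
    refine ⟨j0, ?_⟩
    rw [← hi] at hj0le ⊢
    omega

lemma adj2_horiz (x y : ℤ) : adj2 1 ((x, y) : ℤ × ℤ) (x + 1, y) := by
  have h1 : ¬ (x = x + 1) := by omega
  refine ⟨?_, by simp, by simp, ?_⟩
  · intro h
    exact h1 (congrArg Prod.fst h)
  · simp [h1]

lemma adj2_vert (x y : ℤ) : adj2 1 ((x, y) : ℤ × ℤ) (x, y + 1) := by
  have h1 : ¬ (y = y + 1) := by omega
  refine ⟨?_, by simp, by simp, ?_⟩
  · intro h
    exact h1 (congrArg Prod.snd h)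
  · simp [h1]

lemma fix_horiz_run {X : Set (ℤ × ℤ)} {f : ℤ × ℤ → ℤ × ℤ}
    (hmaps : Set.MapsTo f X X) (hf : DigContinuous2 1 X f)
    {x0 y : ℤ} {k : ℕ}
    (hmem : ∀ j : ℤ, 0 ≤ j → j ≤ (k : ℤ) → ((x0 + j, y) : ℤ × ℤ) ∈ X)
    (h0 : f (x0, y) = (x0, y)) (h1 : f (x0 + (k : ℤ), y) = (x0 + (k : ℤ), y)) :
    ∀ j : ℤ, 0 ≤ j → j ≤ (k : ℤ) → f (x0 + j, y) = (x0 + j, y) := by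
  have hmemF : ∀ j : Fin (k + 1), ((x0 + ((j : ℕ) : ℤ), y) : ℤ × ℤ) ∈ X := by
    intro j
    exact hmem _ (by positivity) (by exact_mod_cast Nat.le_of_lt_succ j.isLt)
  set t : Fin (k + 1) → ℤ × ℤ := fun j => f (x0 + ((j : ℕ) : ℤ), y) with ht
  have hpath : IsPathIn2 1 X k t (x0, y) (x0 + (k : ℤ), y) := by
    refine ⟨fun i => hmaps (hmemF i), ?_, ?_, ?_⟩
    · show f (x0 + (((0 : Fin (k+1)) : ℕ) : ℤ), y) = (x0, y)
      simpa using h0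
    · show f (x0 + (((Fin.last k) : ℕ) : ℤ), y) = (x0 + (k : ℤ), y)
      simpa using h1
    · intro i
      have e1 : ((i.castSucc : Fin (k+1)) : ℕ) = (i : ℕ) := rfl
      have e2 : ((i.succ : Fin (k+1)) : ℕ) = (i : ℕ) + 1 := rfl
      have hadj' : adj2 1 ((x0 + (((i.castSucc : Fin (k+1)) : ℕ) : ℤ), y) : ℤ × ℤ)
          (x0 + (((i.succ : Fin (k+1)) : ℕ) : ℤ), y) := by
        rw [e1, e2]
        push_cast
        rw [show x0 + (((i : ℕ) : ℤ) + 1) = x0 + ((i : ℕ) : ℤ) + 1 from by ring]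
        exact adj2_horiz _ y
      exact hf _ (hmemF i.castSucc) _ (hmemF i.succ) hadj'
  have hrig := path_rigid_horiz hpath (by simp)
  intro j hj0 hjk
  have hjf : j.toNat < k + 1 := by omega
  have := hrig ⟨j.toNat, hjf⟩
  rw [ht] at this
  simp only [] at this
  have ej : ((j.toNat : ℕ) : ℤ) = j := by omega
  rw [ej] at this
  simpa using this

lemma fix_vert_run {X : Set (ℤ × ℤ)} {f : ℤ × ℤ → ℤ × ℤ}
    (hmaps : Set.MapsTo f X X) (hf : DigContinuous2 1 X f)
    {x y0 : ℤ} {k : ℕ}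
    (hmem : ∀ j : ℤ, 0 ≤ j → j ≤ (k : ℤ) → ((x, y0 + j) : ℤ × ℤ) ∈ X)
    (h0 : f (x, y0) = (x, y0)) (h1 : f (x, y0 + (k : ℤ)) = (x, y0 + (k : ℤ))) :
    ∀ j : ℤ, 0 ≤ j → j ≤ (k : ℤ) → f (x, y0 + j) = (x, y0 + j) := by
  have hmemF : ∀ j : Fin (k + 1), ((x, y0 + ((j : ℕ) : ℤ)) : ℤ × ℤ) ∈ X := by
    intro j
    exact hmem _ (by positivity) (by exact_mod_cast Nat.le_of_lt_succ j.isLt)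
  set t : Fin (k + 1) → ℤ × ℤ := fun j => f (x, y0 + ((j : ℕ) : ℤ)) with ht
  have hpath : IsPathIn2 1 X k t (x, y0) (x, y0 + (k : ℤ)) := by
    refine ⟨fun i => hmaps (hmemF i), ?_, ?_, ?_⟩
    · show f (x, y0 + (((0 : Fin (k+1)) : ℕ) : ℤ)) = (x, y0)
      simpa using h0
    · show f (x, y0 + (((Fin.last k) : ℕ) : ℤ)) = (x, y0 + (k : ℤ))
      simpa using h1
    · intro i
      have e1 : ((i.castSucc : Fin (k+1)) : ℕ) = (i : ℕ) := rfl
      have e2 : ((i.succ : Fin (k+1)) : ℕ) = (i : ℕ) + 1 := rfl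
      have hadj' : adj2 1 ((x, y0 + (((i.castSucc : Fin (k+1)) : ℕ) : ℤ)) : ℤ × ℤ)
          (x, y0 + (((i.succ : Fin (k+1)) : ℕ) : ℤ)) := by
        rw [e1, e2]
        push_cast
        rw [show y0 + (((i : ℕ) : ℤ) + 1) = y0 + ((i : ℕ) : ℤ) + 1 from by ring]
        exact adj2_vert x _
      exact hf _ (hmemF i.castSucc) _ (hmemF i.succ) hadj'
  have hrig := path_rigid_vert hpath (by simp)
  intro j hj0 hjk
  have hjf : j.toNat < k + 1 := by omega
  have := hrig ⟨j.toNat, hjf⟩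
  rw [ht] at this
  simp only [] at this
  have ej : ((j.toNat : ℕ) : ℤ) = j := by omega
  rw [ej] at this
  simpa using this

lemma horizseg_mem_interval {T : Set (ℤ × ℤ)} (hH : HorizSeg T) {p q : ℤ × ℤ}
    (hp : p ∈ T) (hq : q ∈ T) {x : ℤ} (h1 : p.1 ≤ x) (h2 : x ≤ q.1) :
    ((x, p.2) : ℤ × ℤ) ∈ T := by
  obtain ⟨⟨hconn, _, _⟩, hrow⟩ := hH
  obtain ⟨k, s, hpath⟩ := hconn p hp q hq
  obtain ⟨j, hj⟩ := path_intermediate_fst hpath h1 h2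
  have hmem := hpath.1 j
  have he : s j = (x, p.2) := Prod.ext hj (hrow _ hmem p hp)
  rwa [he] at hmem

lemma vertseg_mem_interval {T : Set (ℤ × ℤ)} (hV : VertSeg T) {p q : ℤ × ℤ}
    (hp : p ∈ T) (hq : q ∈ T) {x : ℤ} (h1 : p.2 ≤ x) (h2 : x ≤ q.2) :
    ((p.1, x) : ℤ × ℤ) ∈ T := by
  obtain ⟨⟨hconn, _, _⟩, hcol⟩ := hV
  obtain ⟨k, s, hpath⟩ := hconn p hp q hq
  obtain ⟨j, hj⟩ := path_intermediate_snd hpath h1 h2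
  have hmem := hpath.1 j
  have he : s j = (p.1, x) := Prod.ext (hcol _ hmem p hp) hj
  rwa [he] at hmem

lemma exists_max_fst {T : Set (ℤ × ℤ)} (hT : T.Finite) (hne : T.Nonempty) :
    ∃ m ∈ T, ∀ q ∈ T, q.1 ≤ m.1 := by
  obtain ⟨m, hm, hmax⟩ := Set.Finite.exists_maximalFor Prod.fst T hT hne
  refine ⟨m, hm, fun q hq => ?_⟩
  rcases le_total q.1 m.1 with h | h
  · exact h
  · exact (hmax hq h).ge

lemma exists_min_fst {T : Set (ℤ × ℤ)} (hT : T.Finite) (hne : T.Nonempty) :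
    ∃ m ∈ T, ∀ q ∈ T, m.1 ≤ q.1 := by
  obtain ⟨m, hm, hmax⟩ := Set.Finite.exists_maximalFor (fun p : ℤ × ℤ => -p.1) T hT hne
  refine ⟨m, hm, fun q hq => ?_⟩
  rcases le_total m.1 q.1 with h | h
  · exact h
  · have : -m.1 ≤ -q.1 := by omega
    have : -q.1 ≤ -m.1 := hmax hq this
    omega

lemma exists_max_snd {T : Set (ℤ × ℤ)} (hT : T.Finite) (hne : T.Nonempty) :
    ∃ m ∈ T, ∀ q ∈ T, q.2 ≤ m.2 := by
  obtain ⟨m, hm, hmax⟩ := Set.Finite.exists_maximalFor Prod.snd T hT hne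
  refine ⟨m, hm, fun q hq => ?_⟩
  rcases le_total q.2 m.2 with h | h
  · exact h
  · exact (hmax hq h).ge

lemma exists_min_snd {T : Set (ℤ × ℤ)} (hT : T.Finite) (hne : T.Nonempty) :
    ∃ m ∈ T, ∀ q ∈ T, m.2 ≤ q.2 := by
  obtain ⟨m, hm, hmax⟩ := Set.Finite.exists_maximalFor (fun p : ℤ × ℤ => -p.2) T hT hne
  refine ⟨m, hm, fun q hq => ?_⟩
  rcases le_total m.2 q.2 with h | h
  · exact h
  · have : -m.2 ≤ -q.2 := by omega
    have : -q.2 ≤ -m.2 := hmax hq this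
    omega

lemma horiz_extreme_endpoint {T : Set (ℤ × ℤ)} (hH : HorizSeg T) {m : ℤ × ℤ} (hm : m ∈ T)
    (hext : (∀ q ∈ T, q.1 ≤ m.1) ∨ (∀ q ∈ T, m.1 ≤ q.1)) : IsEndpointOf T m := by
  refine ⟨hm, ?_⟩
  rintro q1 ⟨hq1T, hq1a⟩ q2 ⟨hq2T, hq2a⟩
  have e1 : q1.2 = m.2 := hH.2 q1 hq1T m hm
  have e2 : q2.2 = m.2 := hH.2 q2 hq2T m hm
  have d1 := abs_le.mp (adj2_fst_sub hq1a)
  have d2 := abs_le.mp (adj2_fst_sub hq2a)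
  have n1 : q1.1 ≠ m.1 := by
    intro h
    exact hq1a.1 (Prod.ext h.symm e1.symm)
  have n2 : q2.1 ≠ m.1 := by
    intro h
    exact hq2a.1 (Prod.ext h.symm e2.symm)
  rcases hext with hext | hext
  · have := hext q1 hq1T
    have := hext q2 hq2T
    exact Prod.ext (by omega) (e1.trans e2.symm)
  · have := hext q1 hq1T
    have := hext q2 hq2T
    exact Prod.ext (by omega) (e1.trans e2.symm)

lemma vert_extreme_endpoint {T : Set (ℤ × ℤ)} (hV : VertSeg T) {m : ℤ × ℤ} (hm : m ∈ T)
    (hext : (∀ q ∈ T, q.2 ≤ m.2) ∨ (∀ q ∈ T, m.2 ≤ q.2)) : IsEndpointOf T m := by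
  refine ⟨hm, ?_⟩
  rintro q1 ⟨hq1T, hq1a⟩ q2 ⟨hq2T, hq2a⟩
  have e1 : q1.1 = m.1 := hV.2 q1 hq1T m hm
  have e2 : q2.1 = m.1 := hV.2 q2 hq2T m hm
  have d1 := abs_le.mp (adj2_snd_sub hq1a)
  have d2 := abs_le.mp (adj2_snd_sub hq2a)
  have n1 : q1.2 ≠ m.2 := by
    intro h
    exact hq1a.1 (Prod.ext e1.symm h.symm)
  have n2 : q2.2 ≠ m.2 := by
    intro h
    exact hq2a.1 (Prod.ext e2.symm h.symm)
  rcases hext with hext | hext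
  · have := hext q1 hq1T
    have := hext q2 hq2T
    exact Prod.ext (e1.trans e2.symm) (by omega)
  · have := hext q1 hq1T
    have := hext q2 hq2T
    exact Prod.ext (e1.trans e2.symm) (by omega)

lemma exists_maximal_ext {S : Set (ℤ × ℤ)} (hS : S.Finite) (P : Set (ℤ × ℤ) → Prop)
    {T : Set (ℤ × ℤ)} (hTS : T ⊆ S) (hP : P T) :
    ∃ T', T ⊆ T' ∧ T' ⊆ S ∧ P T' ∧ ∀ T'', T' ⊆ T'' → T'' ⊆ S → P T'' → T'' = T' := by
  have hfin : {T' : Set (ℤ × ℤ) | T ⊆ T' ∧ T' ⊆ S ∧ P T'}.Finite :=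
    Set.Finite.subset hS.finite_subsets (fun T' hT' => hT'.2.1)
  obtain ⟨T', hT'mem, hmax⟩ :=
    Set.Finite.exists_maximalFor id _ hfin ⟨T, Set.Subset.rfl, hTS, hP⟩
  refine ⟨T', hT'mem.1, hT'mem.2.1, hT'mem.2.2, ?_⟩
  intro T'' h1 h2 h3
  exact Set.Subset.antisymm (hmax ⟨hT'mem.1.trans h1, h2, h3⟩ h1) h1

lemma path_pair {u : ℕ} {Y : Set (ℤ × ℤ)} {a b : ℤ × ℤ} (ha : a ∈ Y) (hb : b ∈ Y)
    (h : adj2 u a b) : IsPathIn2 u Y 1 ![a, b] a b := by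
  refine ⟨?_, rfl, rfl, ?_⟩
  · intro i
    fin_cases i
    · exact ha
    · exact hb
  · intro i
    fin_cases i
    right
    exact h

lemma pair_connected {u : ℕ} {a b : ℤ × ℤ} (h : adj2 u a b) :
    ConnectedIn2 u {a, b} := by
  have ha : a ∈ ({a, b} : Set (ℤ × ℤ)) := Or.inl rfl
  have hb : b ∈ ({a, b} : Set (ℤ × ℤ)) := Or.inr rfl
  intro x hx y hy
  rcases hx with rfl | rfl <;> rcases hy with rfl | rfl
  · exact ⟨0, _, path_singleton ha⟩
  · exact ⟨1, _, path_pair ha hb h⟩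
  · exact ⟨1, _, path_pair hb ha (adj2_symm h)⟩
  · exact ⟨0, _, path_singleton hb⟩

lemma pair_segment {p q : ℤ × ℤ} (h : adj2 2 p q) : IsSegment2 {p, q} := by
  refine ⟨pair_connected h, ⟨p, Or.inl rfl, q, Or.inr rfl, h.1⟩,
    ⟨p.2 - q.2, q.1 - p.1, (p.2 - q.2) * p.1 + (q.1 - p.1) * p.2, ?_, ?_⟩⟩
  · rintro ⟨h1, h2⟩
    exact h.1 (Prod.ext (by omega) (by omega))
  · intro r hr
    rcases hr with rfl | rfl
    · rfl
    · ring

lemma pair_seg_type {p q : ℤ × ℤ} (h : adj2 2 p q) :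
    HorizSeg {p, q} ∨ VertSeg {p, q} ∨ SlantSeg {p, q} := by
  have hseg := pair_segment h
  have d1 := abs_le.mp (adj2_fst_sub h)
  have d2 := abs_le.mp (adj2_snd_sub h)
  by_cases h2 : p.2 = q.2
  · left
    refine ⟨hseg, ?_⟩
    intro r hr s hs
    rcases hr with rfl | rfl <;> rcases hs with rfl | rfl <;> omega
  by_cases h1 : p.1 = q.1
  · right; left
    refine ⟨hseg, ?_⟩
    intro r hr s hs
    rcases hr with rfl | rfl <;> rcases hs with rfl | rfl <;> omega
  · right; right
    refine ⟨hseg, ?_⟩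
    by_cases hd : p.1 - q.1 = p.2 - q.2
    · left
      intro r hr s hs
      rcases hr with rfl | rfl <;> rcases hs with rfl | rfl <;> omega
    · right
      intro r hr s hs
      rcases hr with rfl | rfl <;> rcases hs with rfl | rfl <;> omega

lemma fix_on_horizseg {X : Set (ℤ × ℤ)} {f : ℤ × ℤ → ℤ × ℤ}
    (hmaps : Set.MapsTo f X X) (hf : DigContinuous2 1 X f)
    {T : Set (ℤ × ℤ)} (hTfin : T.Finite) (hTX : T ⊆ X) (hH : HorizSeg T)
    (hfix : ∀ e, IsEndpointOf T e → f e = e) {p : ℤ × ℤ} (hp : p ∈ T) : f p = p := by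
  obtain ⟨mn, hmn, hminle⟩ := exists_min_fst hTfin ⟨p, hp⟩
  obtain ⟨mx, hmx, hmaxle⟩ := exists_max_fst hTfin ⟨p, hp⟩
  have hymn : mn.2 = p.2 := hH.2 mn hmn p hp
  have hymx : mx.2 = p.2 := hH.2 mx hmx p hp
  have hle : mn.1 ≤ mx.1 := le_trans (hminle p hp) (hmaxle p hp)
  set k : ℕ := (mx.1 - mn.1).toNat with hk
  have hkz : ((k : ℕ) : ℤ) = mx.1 - mn.1 := by omega
  have hmem : ∀ j : ℤ, 0 ≤ j → j ≤ (k : ℤ) → ((mn.1 + j, mn.2) : ℤ × ℤ) ∈ X := by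
    intro j hj0 hjk
    apply hTX
    exact horizseg_mem_interval hH hmn hmx (by omega) (by omega)
  have h0 : f (mn.1, mn.2) = (mn.1, mn.2) := by
    rw [show ((mn.1, mn.2) : ℤ × ℤ) = mn from rfl]
    exact hfix mn (horiz_extreme_endpoint hH hmn (Or.inr hminle))
  have h1 : f (mn.1 + (k : ℤ), mn.2) = (mn.1 + (k : ℤ), mn.2) := by
    have e : ((mn.1 + (k : ℤ), mn.2) : ℤ × ℤ) = mx := Prod.ext (by omega) (by rw [hymn, hymx])
    rw [e]
    exact hfix mx (horiz_extreme_endpoint hH hmx (Or.inl hmaxle))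
  have := fix_horiz_run hmaps hf hmem h0 h1 (p.1 - mn.1) (by have := hminle p hp; omega)
    (by have := hmaxle p hp; omega)
  have e : ((mn.1 + (p.1 - mn.1), mn.2) : ℤ × ℤ) = p := Prod.ext (by omega) (by rw [hymn])
  rwa [e] at this

lemma fix_on_vertseg {X : Set (ℤ × ℤ)} {f : ℤ × ℤ → ℤ × ℤ}
    (hmaps : Set.MapsTo f X X) (hf : DigContinuous2 1 X f)
    {T : Set (ℤ × ℤ)} (hTfin : T.Finite) (hTX : T ⊆ X) (hV : VertSeg T)
    (hfix : ∀ e, IsEndpointOf T e → f e = e) {p : ℤ × ℤ} (hp : p ∈ T) : f p = p := by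
  obtain ⟨mn, hmn, hminle⟩ := exists_min_snd hTfin ⟨p, hp⟩
  obtain ⟨mx, hmx, hmaxle⟩ := exists_max_snd hTfin ⟨p, hp⟩
  have hymn : mn.1 = p.1 := hV.2 mn hmn p hp
  have hymx : mx.1 = p.1 := hV.2 mx hmx p hp
  have hle : mn.2 ≤ mx.2 := le_trans (hminle p hp) (hmaxle p hp)
  set k : ℕ := (mx.2 - mn.2).toNat with hk
  have hkz : ((k : ℕ) : ℤ) = mx.2 - mn.2 := by omega
  have hmem : ∀ j : ℤ, 0 ≤ j → j ≤ (k : ℤ) → ((mn.1, mn.2 + j) : ℤ × ℤ) ∈ X := by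
    intro j hj0 hjk
    apply hTX
    exact vertseg_mem_interval hV hmn hmx (by omega) (by omega)
  have h0 : f (mn.1, mn.2) = (mn.1, mn.2) := by
    rw [show ((mn.1, mn.2) : ℤ × ℤ) = mn from rfl]
    exact hfix mn (vert_extreme_endpoint hV hmn (Or.inr hminle))
  have h1 : f (mn.1, mn.2 + (k : ℤ)) = (mn.1, mn.2 + (k : ℤ)) := by
    have e : ((mn.1, mn.2 + (k : ℤ)) : ℤ × ℤ) = mx := Prod.ext (by rw [hymn, hymx]) (by omega)
    rw [e]
    exact hfix mx (vert_extreme_endpoint hV hmx (Or.inl hmaxle))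
  have := fix_vert_run hmaps hf hmem h0 h1 (p.2 - mn.2) (by have := hminle p hp; omega)
    (by have := hmaxle p hp; omega)
  have e : ((mn.1, mn.2 + (p.2 - mn.2)) : ℤ × ℤ) = p := Prod.ext (by rw [hymn]) (by omega)
  rwa [e] at this

lemma disk_fixed {X S V : Set (ℤ × ℤ)} {f : ℤ × ℤ → ℤ × ℤ}
    (hVX : V ⊆ X)
    (hbd : IsBoundingCurve S V)
    (hconv : DigitallyConvex V)
    (hmaps : Set.MapsTo f X X) (hf : DigContinuous2 1 X f)
    (hfixA : ∀ x, (∃ T, (MaxHorizSegOf S T ∨ MaxVertSegOf S T) ∧ IsEndpointOf T x) → f x = x)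
    (hfixB : ∀ x, (∃ T, MaxSlantSegOf S T ∧ x ∈ T) → f x = x)
    {p : ℤ × ℤ} (hp : p ∈ V) : f p = p := by
  obtain ⟨⟨m, hm, s, hinj, hrange, hstep⟩, I, E, hIE, hIfin, hEinf, hcomps, hVSI⟩ := hbd
  haveI : NeZero m := ⟨by omega⟩
  have hSfin : S.Finite := by
    rw [← hrange]
    exact Set.finite_range s
  have hSsubV : S ⊆ V := by rw [hVSI]; exact Set.subset_union_left
  have hIsubV : I ⊆ V := by rw [hVSI]; exact Set.subset_union_right
  have hIcomp : IsComponent2 1 Sᶜ I := by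
    have : I ∈ {C | IsComponent2 1 Sᶜ C} := by
      rw [hcomps]; exact Or.inl rfl
    exact this
  have hVfin : V.Finite := by
    rw [hVSI]; exact hSfin.union hIfin
  -- every c₁-neighbor of an interior point is in V
  have hnbr : ∀ w ∈ I, ∀ z : ℤ × ℤ, adj2 1 z w → z ∈ V := by
    intro w hw z hadj
    by_contra hzV
    have hzS : z ∈ Sᶜ := fun hzS => hzV (hSsubV hzS)
    have : z ∈ I := component_absorb hIcomp hzS ⟨w, hw, hadj⟩
    exact hzV (hIsubV this)
  -- m ≥ 2
  have hm2 : 2 ≤ m := by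
    by_contra hlt
    have hm1 : m = 1 := by omega
    subst hm1
    have hSsing : ∀ q ∈ S, q = s 0 := by
      intro q hq
      rw [← hrange] at hq
      obtain ⟨i, rfl⟩ := hq
      exact congrArg s (Subsingleton.elim _ _)
    obtain ⟨w, hwI, hwmax⟩ := exists_max_snd hIfin hIcomp.2.1
    obtain ⟨w2, hw2I, hw2min⟩ := exists_min_snd hIfin hIcomp.2.1
    have hz1 : ((w.1, w.2 + 1) : ℤ × ℤ) ∈ V := by
      apply hnbr w hwI
      have := adj2_symm (adj2_vert w.1 w.2)
      simpa using this
    have hz2 : ((w2.1, w2.2 - 1) : ℤ × ℤ) ∈ V := by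
      apply hnbr w2 hw2I
      have := adj2_vert w2.1 (w2.2 - 1)
      have e : w2.2 - 1 + 1 = w2.2 := by omega
      rw [e] at this
      simpa using this
    have hz1S : ((w.1, w.2 + 1) : ℤ × ℤ) ∈ S := by
      rw [hVSI] at hz1
      rcases hz1 with h | h
      · exact h
      · have := hwmax _ h
        simp at this
    have hz2S : ((w2.1, w2.2 - 1) : ℤ × ℤ) ∈ S := by
      rw [hVSI] at hz2
      rcases hz2 with h | h
      · exact h
      · have := hw2min _ h
        simp at this
    have e1 := hSsing _ hz1S
    have e2 := hSsing _ hz2S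
    have : w.2 + 1 = w2.2 - 1 := by
      have := e1.trans e2.symm
      have := congrArg Prod.snd this
      simpa using this
    have := hw2min w hwI
    have := hwmax w2 hw2I
    omega
  -- boundary is fixed
  have hbdfix : ∀ q ∈ S, f q = q := by
    intro q hq
    rw [← hrange] at hq
    obtain ⟨i, rfl⟩ := hq
    have hone : (1 : ZMod m) ≠ 0 := by
      haveI : Fact (1 < m) := ⟨by omega⟩
      exact one_ne_zero
    have hne : s i ≠ s (i + 1) := by
      intro h
      exact hone (left_eq_add.mp (hinj h))
    have hadj : adj2 2 (s i) (s (i + 1)) := (hstep i).resolve_left hne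
    have hpairS : ({s i, s (i + 1)} : Set (ℤ × ℤ)) ⊆ S := by
      rintro x (rfl | rfl)
      · rw [← hrange]; exact ⟨i, rfl⟩
      · rw [← hrange]; exact ⟨i + 1, rfl⟩
    have hqmem : s i ∈ ({s i, s (i + 1)} : Set (ℤ × ℤ)) := Or.inl rfl
    rcases pair_seg_type hadj with hty | hty | hty
    · obtain ⟨T', hTT', hT'S, hT'P, hT'max⟩ := exists_maximal_ext hSfin HorizSeg hpairS hty
      exact fix_on_horizseg hmaps hf (hSfin.subset hT'S) (fun x hx => hVX (hSsubV (hT'S hx)))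
        hT'P (fun e he => hfixA e ⟨T', Or.inl ⟨hT'S, hT'P, hT'max⟩, he⟩) (hTT' hqmem)
    · obtain ⟨T', hTT', hT'S, hT'P, hT'max⟩ := exists_maximal_ext hSfin VertSeg hpairS hty
      exact fix_on_vertseg hmaps hf (hSfin.subset hT'S) (fun x hx => hVX (hSsubV (hT'S hx)))
        hT'P (fun e he => hfixA e ⟨T', Or.inr ⟨hT'S, hT'P, hT'max⟩, he⟩) (hTT' hqmem)
    · obtain ⟨T', hTT', hT'S, hT'P, hT'max⟩ := exists_maximal_ext hSfin SlantSeg hpairS hty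
      exact hfixB _ ⟨T', ⟨hT'S, hT'P, hT'max⟩, hTT' hqmem⟩
  -- column argument
  set Vp : Set (ℤ × ℤ) := {q ∈ V | q.1 = p.1} with hVp
  have hVpfin : Vp.Finite := hVfin.subset (fun q hq => hq.1)
  have hpVp : p ∈ Vp := ⟨hp, rfl⟩
  obtain ⟨mx, hmxVp, hmxmax⟩ := exists_max_snd hVpfin ⟨p, hpVp⟩
  obtain ⟨mn, hmnVp, hmnmin⟩ := exists_min_snd hVpfin ⟨p, hpVp⟩
  have hmx1 : mx.1 = p.1 := hmxVp.2
  have hmn1 : mn.1 = p.1 := hmnVp.2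
  have hmnmx : mn.2 ≤ mx.2 := le_trans (hmnmin p hpVp) (hmxmax p hpVp)
  -- convexity: the whole column is in V
  have hcol : ∀ y : ℤ, mn.2 ≤ y → y ≤ mx.2 → ((p.1, y) : ℤ × ℤ) ∈ V := by
    intro y hy1 hy2
    rcases eq_or_lt_of_le hmnmx with heq | hlt
    · have : y = mn.2 := by omega
      subst this
      have : ((p.1, mn.2) : ℤ × ℤ) = mn := Prod.ext hmn1.symm rfl
      rw [this]
      exact hmnVp.1
    · apply hconv
      have hu : toR2 mn ∈ convexHull ℝ (toR2 '' V) :=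
        subset_convexHull ℝ _ ⟨mn, hmnVp.1, rfl⟩
      have hv : toR2 mx ∈ convexHull ℝ (toR2 '' V) :=
        subset_convexHull ℝ _ ⟨mx, hmxVp.1, rfl⟩
      set d : ℝ := (mx.2 : ℝ) - (mn.2 : ℝ) with hd
      have hdpos : 0 < d := by
        rw [hd]
        have : (mn.2 : ℝ) < (mx.2 : ℝ) := by exact_mod_cast hlt
        linarith
      set a : ℝ := ((mx.2 : ℝ) - (y : ℝ)) / d with ha
      set b : ℝ := ((y : ℝ) - (mn.2 : ℝ)) / d with hb
      have hy1' : (mn.2 : ℝ) ≤ (y : ℝ) := by exact_mod_cast hy1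
      have hy2' : (y : ℝ) ≤ (mx.2 : ℝ) := by exact_mod_cast hy2
      have ha0 : 0 ≤ a := div_nonneg (by linarith) hdpos.le
      have hb0 : 0 ≤ b := div_nonneg (by linarith) hdpos.le
      have hab : a + b = 1 := by
        rw [ha, hb, ← add_div, hd]
        rw [div_eq_one_iff_eq (by rw [← hd]; exact hdpos.ne')]; ring
      have := (convex_convexHull ℝ (toR2 '' V)) hu hv ha0 hb0 hab
      have he : a • toR2 mn + b • toR2 mx = toR2 ((p.1, y) : ℤ × ℤ) := by
        unfold toR2
        rw [Prod.smul_mk, Prod.smul_mk, Prod.mk_add_mk]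
        refine Prod.ext ?_ ?_
        · show a * (mn.1 : ℝ) + b * (mx.1 : ℝ) = ((p.1 : ℤ) : ℝ)
          rw [hmn1, hmx1]
          have : a * (p.1 : ℝ) + b * (p.1 : ℝ) = (a + b) * (p.1 : ℝ) := by ring
          rw [this, hab, one_mul]
        · show a * (mn.2 : ℝ) + b * (mx.2 : ℝ) = ((y : ℤ) : ℝ)
          rw [ha, hb]
          field_simp
          ring
      rwa [he] at this
  -- the extremes of the column are on S
  have hmxS : mx ∈ S := by
    have := hmxVp.1
    rw [hVSI] at this
    rcases this with h | h
    · exact h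
    · exfalso
      have hz : ((mx.1, mx.2 + 1) : ℤ × ℤ) ∈ V := by
        apply hnbr mx h
        have := adj2_symm (adj2_vert mx.1 mx.2)
        simpa using this
      have : ((mx.1, mx.2 + 1) : ℤ × ℤ) ∈ Vp := ⟨hz, by simpa using hmx1⟩
      have := hmxmax _ this
      simp at this
  have hmnS : mn ∈ S := by
    have := hmnVp.1
    rw [hVSI] at this
    rcases this with h | h
    · exact h
    · exfalso
      have hz : ((mn.1, mn.2 - 1) : ℤ × ℤ) ∈ V := by
        apply hnbr mn h
        have := adj2_vert mn.1 (mn.2 - 1)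
        have e : mn.2 - 1 + 1 = mn.2 := by omega
        rw [e] at this
        simpa using this
      have : ((mn.1, mn.2 - 1) : ℤ × ℤ) ∈ Vp := ⟨hz, by simpa using hmn1⟩
      have := hmnmin _ this
      simp at this
  -- conclude via vertical rigidity
  set k : ℕ := (mx.2 - mn.2).toNat with hk
  have hkz : ((k : ℕ) : ℤ) = mx.2 - mn.2 := by omega
  have hmem : ∀ j : ℤ, 0 ≤ j → j ≤ (k : ℤ) → ((p.1, mn.2 + j) : ℤ × ℤ) ∈ X := by
    intro j hj0 hjk
    exact hVX (hcol (mn.2 + j) (by omega) (by omega))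
  have h0 : f (p.1, mn.2) = (p.1, mn.2) := by
    have e : ((p.1, mn.2) : ℤ × ℤ) = mn := Prod.ext hmn1.symm rfl
    rw [e]
    exact hbdfix mn hmnS
  have h1 : f (p.1, mn.2 + (k : ℤ)) = (p.1, mn.2 + (k : ℤ)) := by
    have e : ((p.1, mn.2 + (k : ℤ)) : ℤ × ℤ) = mx := Prod.ext hmx1.symm (by omega)
    rw [e]
    exact hbdfix mx hmxS
  have := fix_vert_run hmaps hf hmem h0 h1 (p.2 - mn.2)
    (by have := hmnmin p hpVp; omega) (by have := hmxmax p hpVp; omega)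
  have e : ((p.1, mn.2 + (p.2 - mn.2)) : ℤ × ℤ) = p := Prod.ext rfl (by omega)
  rwa [e] at this

end CornersAux

/-- Theorem (freezing sets from unions of thick convex disks, `c₁` case):
if `V 1, …, V n ⊆ X ⊆ ℤ²` are thick convex digital disks with bounding curves
`C 1, …, C n` and `X' = ⋃ i, V i`, then `(X \ X')` together with, for each `i`, the
endpoints of the maximal horizontal and maximal vertical segments of `C i` and the
union of the maximal slanted segments of `C i`, is a freezing set for `(X, c₁)`. -/
theorem corners_c1 (X : Set (ℤ × ℤ)) (n : ℕ) (V C : Fin n → Set (ℤ × ℤ))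
    (hVX : ∀ i, V i ⊆ X)
    (hbd : ∀ i, IsBoundingCurve (C i) (V i))
    (hconv : ∀ i, DigitallyConvex (V i))
    (hthick : ∀ i, ThickWRT (V i) (C i)) :
    FreezingSet2 1 X
      ((X \ ⋃ i, V i) ∪
        ⋃ i, ({x | ∃ T, (MaxHorizSegOf (C i) T ∨ MaxVertSegOf (C i) T) ∧ IsEndpointOf T x} ∪
          {x | ∃ T, MaxSlantSegOf (C i) T ∧ x ∈ T})) := by
  classical
  constructor
  · rintro x (hx | hx)
    · exact hx.1
    · simp only [Set.mem_iUnion] at hx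
      obtain ⟨i, hx⟩ := hx
      have hCV : C i ⊆ V i := by
        obtain ⟨_, I, E, _, _, _, _, hVSI⟩ := hbd i
        rw [hVSI]
        exact Set.subset_union_left
      rcases hx with hx | hx
      · obtain ⟨T, hT, hend⟩ := hx
        have hTC : T ⊆ C i := by
          rcases hT with hT | hT
          · exact hT.1
          · exact hT.1
        exact hVX i (hCV (hTC hend.1))
      · obtain ⟨T, hT, hmem⟩ := hx
        exact hVX i (hCV (hT.1 hmem))
  · intro f hmaps hf hfix x hx
    by_cases hx' : x ∈ ⋃ i, V i
    · simp only [Set.mem_iUnion] at hx'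
      obtain ⟨i, hxV⟩ := hx'
      refine CornersAux.disk_fixed (hVX i) (hbd i) (hconv i) hmaps hf ?_ ?_ hxV
      · intro z hz
        apply hfix
        apply Set.mem_union_right
        exact Set.mem_iUnion.mpr ⟨i, Set.mem_union_left _ hz⟩
      · intro z hz
        apply hfix
        apply Set.mem_union_right
        exact Set.mem_iUnion.mpr ⟨i, Set.mem_union_right _ hz⟩
    · exact hfix x (Set.mem_union_left _ ⟨hx, hx'⟩)
end

section
/- Let X ⊆ ℤ² and let V₁, …, V_n ⊆ X be thick convex digital disks with bounding curves C₁, …, C_n, and let X′ = ⋃_{i=1}^n V_i. For each i let B_{1,i} be the union of the maximal horizontal and maximal vertical segments of C_i, and let B_{2,i} be the set of endpoints of the maximal slanted segments of C_i. Then B = (X \ X′) ∪ ⋃_{i=1}^n (B_{1,i} ∪ B_{2,i}) is a freezing set for (X, c₂). -/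
/-
A `c₂`-continuous map moves each coordinate by at most one per step of a `c₂`-path, so on a
straight path whose coordinate grows by one per step and whose two ends are fixed, that
coordinate is pinned at every point in between. Every point of a bounding curve has a
neighbour on the curve, so it lies on a maximal horizontal or vertical segment (fixed by
hypothesis) or on a maximal slanted segment, which is pinned between its fixed endpoints.
By convexity, the horizontal and the vertical chord of a disk through any of its points lie
in the disk, and their ends lie on the bounding curve, which is already fixed; this pins
both coordinates of the point. Points outside all disks are fixed by hypothesis.
-/

section Adjacency

variable {u : ℕ} {x y d : ℤ × ℤ}

lemma adj2.symm (h : adj2 u x y) : adj2 u y x := by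
  obtain ⟨hne, h₁, h₂, hcount⟩ := h
  refine ⟨hne.symm, abs_sub_comm x.1 y.1 ▸ h₁, abs_sub_comm x.2 y.2 ▸ h₂, ?_⟩
  simpa only [eq_comm] using hcount

lemma adj2.mono {v : ℕ} (huv : u ≤ v) (h : adj2 u x y) : adj2 v x y :=
  ⟨h.1, h.2.1, h.2.2.1, h.2.2.2.trans huv⟩

lemma adj2_one_add_of_isAxisDir (hd : isAxisDir d) (z : ℤ × ℤ) : adj2 1 (z + d) z := by
  obtain ⟨d₁, d₂⟩ := d
  rcases hd with ⟨h₁, h₂⟩ | ⟨h₁, h₂⟩ <;>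
  · simp only [abs_eq zero_le_one] at h₁ h₂
    rcases h₁ with rfl | rfl <;> (try rcases h₂ with rfl | rfl) <;> simp [adj2, Prod.ext_iff]

lemma adj2_two_iff : adj2 2 x y ↔ x ≠ y ∧ |x.1 - y.1| ≤ 1 ∧ |x.2 - y.2| ≤ 1 :=
  ⟨fun h => ⟨h.1, h.2.1, h.2.2.1⟩, fun ⟨hne, h₁, h₂⟩ => ⟨hne, h₁, h₂, by split_ifs <;> omega⟩⟩

end Adjacency

section Paths

variable {u k : ℕ} {Y Y' : Set (ℤ × ℤ)} {s : Fin (k + 1) → ℤ × ℤ} {a b x : ℤ × ℤ}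

lemma isPathIn2_const (ha : a ∈ Y) : IsPathIn2 u Y 0 (fun _ => a) a a :=
  ⟨fun _ => ha, rfl, rfl, fun i => i.elim0⟩

lemma IsPathIn2.mono (h : IsPathIn2 u Y k s a b) (hY : Y ⊆ Y') : IsPathIn2 u Y' k s a b :=
  ⟨fun i => hY (h.1 i), h.2.1, h.2.2.1, h.2.2.2⟩

lemma IsPathIn2.cons (h : IsPathIn2 u Y k s a b) (hc : x ∈ Y) (hxa : adj2 u x a) :
    IsPathIn2 u Y (k + 1) (Fin.cons x s) x b := by
  obtain ⟨hmem, h0, hlast, hstep⟩ := h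
  refine ⟨Fin.cases hc hmem, rfl, by rw [← Fin.succ_last, Fin.cons_succ, hlast], ?_⟩
  refine Fin.cases ?_ fun i => ?_
  · simp [h0, hxa]
  · simpa [← Fin.succ_castSucc] using hstep i

lemma IsPathIn2.reverse (h : IsPathIn2 u Y k s a b) : IsPathIn2 u Y k (s ∘ Fin.rev) b a := by
  obtain ⟨hmem, h0, hlast, hstep⟩ := h
  refine ⟨fun i => hmem _, by simpa using hlast, by simpa using h0, fun i => ?_⟩
  simp only [Function.comp_apply, Fin.rev_castSucc, Fin.rev_succ]
  exact (hstep i.rev).imp Eq.symm adj2.symm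

lemma connectedIn2_singleton : ConnectedIn2 u {a} := by
  rintro _ rfl _ rfl
  exact ⟨0, _, isPathIn2_const rfl⟩

lemma ConnectedIn2.insert_of_adj2 (hY : ConnectedIn2 u Y) (hb : b ∈ Y) (hab : adj2 u a b) :
    ConnectedIn2 u (insert a Y) := by
  have from_a : ∀ y ∈ Y, ∃ k s, IsPathIn2 u (insert a Y) k s a y := fun y hy => by
    obtain ⟨k, s, hs⟩ := hY b hb y hy
    exact ⟨k + 1, _, (hs.mono (Set.subset_insert a Y)).cons (Set.mem_insert a Y) hab⟩
  rintro x (rfl | hx) y (rfl | hy)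
  · exact ⟨0, _, isPathIn2_const (Set.mem_insert _ _)⟩
  · exact from_a y hy
  · obtain ⟨k, s, hs⟩ := from_a x hx
    exact ⟨k, _, hs.reverse⟩
  · obtain ⟨k, s, hs⟩ := hY x hx y hy
    exact ⟨k, s, hs.mono (Set.subset_insert a Y)⟩

lemma IsComponent2.mem_of_adj2 {C : Set (ℤ × ℤ)} (hC : IsComponent2 u Y C) (hb : b ∈ C)
    (hab : adj2 u a b) (ha : a ∈ Y) : a ∈ C := by
  rw [← hC.2.2.2 (insert a C) (Set.subset_insert a C) (Set.insert_subset ha hC.1)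
    (hC.2.2.1.insert_of_adj2 hb hab)]
  exact Set.mem_insert a C

variable {π : ℤ × ℤ → ℤ} (hπ : ∀ x y, adj2 u x y → |π x - π y| ≤ 1)
include hπ

lemma IsPathIn2.exists_eq_of_le (h : IsPathIn2 u Y k s a b) {t : ℤ} (ha : π a ≤ t)
    (hb : t ≤ π b) : ∃ y ∈ Y, π y = t := by
  induction k generalizing a with
  | zero =>
    obtain ⟨hmem, h0, hlast, -⟩ := h
    have hab : a = b := h0.symm.trans hlast
    exact ⟨a, h0 ▸ hmem 0, le_antisymm ha (hab ▸ hb)⟩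
  | succ k ih =>
    obtain ⟨hmem, h0, hlast, hstep⟩ := h
    by_cases h1 : π (s 1) ≤ t
    · refine ih (s := Fin.tail s) ⟨fun i => hmem _, rfl, ?_, fun i => ?_⟩ h1
      · simpa [Fin.tail] using hlast
      · simpa only [Fin.tail, Fin.succ_castSucc] using hstep i.succ
    · refine ⟨a, h0 ▸ hmem 0, le_antisymm ha ?_⟩
      have := hstep 0
      simp only [Fin.castSucc_zero, Fin.succ_zero_eq_one, h0] at this
      rcases this with h' | h'
      · rw [h']; omega
      · have := abs_le.mp (hπ _ _ h'); omega

lemma ConnectedIn2.exists_eq_of_le (hY : ConnectedIn2 u Y) (ha : a ∈ Y) (hb : b ∈ Y) {t : ℤ}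
    (hat : π a ≤ t) (htb : t ≤ π b) : ∃ y ∈ Y, π y = t := by
  obtain ⟨k, s, hs⟩ := hY a ha b hb
  exact hs.exists_eq_of_le hπ hat htb

end Paths

section Pinning

variable {u : ℕ} {X : Set (ℤ × ℤ)} {f : ℤ × ℤ → ℤ × ℤ} {π : ℤ × ℤ → ℤ} {G : ℤ → ℤ × ℤ}
  {a b : ℤ}

lemma DigContinuous2.abs_sub_le_of_adj2 (hf : DigContinuous2 u X f)
    (hπ : ∀ x y, adj2 u x y → |π x - π y| ≤ 1) {x y : ℤ × ℤ} (hx : x ∈ X) (hy : y ∈ X)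
    (hxy : adj2 u x y) : |π (f x) - π (f y)| ≤ 1 := by
  rcases hf x hx y hy hxy with h | h
  · simp [h]
  · exact hπ _ _ h

lemma DigContinuous2.abs_sub_le_along (hf : DigContinuous2 u X f)
    (hπ : ∀ x y, adj2 u x y → |π x - π y| ≤ 1) (hG : ∀ t, adj2 u (G t) (G (t + 1)))
    (hX : ∀ t ∈ Set.Icc a b, G t ∈ X) (hab : a ≤ b) : |π (f (G b)) - π (f (G a))| ≤ b - a := by
  induction b, hab using Int.leInduction with
  | base => simp
  | succ b hab ih =>
    have hstep := hf.abs_sub_le_of_adj2 hπ (hX b ⟨hab, by omega⟩) (hX (b + 1) ⟨by omega, le_rfl⟩)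
      (hG b)
    have ih := ih fun t ht => hX t ⟨ht.1, by linarith [ht.2]⟩
    rw [abs_le] at hstep ih ⊢
    omega

lemma DigContinuous2.apply_eq_of_fixed_ends (hf : DigContinuous2 u X f)
    (hπ : ∀ x y, adj2 u x y → |π x - π y| ≤ 1) (hG : ∀ t, adj2 u (G t) (G (t + 1)))
    {c : ℤ} (hπG : ∀ t, π (G t) = t + c) (hX : ∀ t ∈ Set.Icc a b, G t ∈ X)
    (ha : f (G a) = G a) (hb : f (G b) = G b) {t : ℤ} (ht : t ∈ Set.Icc a b) :
    π (f (G t)) = π (G t) := by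
  have left := hf.abs_sub_le_along hπ hG (fun s hs => hX s ⟨hs.1, hs.2.trans ht.2⟩) ht.1
  have right := hf.abs_sub_le_along hπ hG (fun s hs => hX s ⟨ht.1.trans hs.1, hs.2⟩) ht.2
  rw [ha, hπG] at left
  rw [hb, hπG] at right
  rw [hπG, abs_le] at *
  omega

end Pinning

section Segments

variable {p q : ℤ × ℤ} {S T : Set (ℤ × ℤ)}

lemma isSegment2_pair (h : adj2 2 p q) : IsSegment2 {p, q} := by
  refine ⟨connectedIn2_singleton.insert_of_adj2 rfl h, ⟨p, by simp, q, by simp, h.1⟩,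
    q.2 - p.2, p.1 - q.1, (q.2 - p.2) * p.1 + (p.1 - q.1) * p.2, fun h0 => h.1 ?_, ?_⟩
  · exact Prod.ext (by omega) (by omega)
  · rintro r (rfl | rfl) <;> ring

lemma exists_maximal_superset {α : Type*} {P : Set α → Prop} {S T : Set α} (hS : S.Finite)
    (hT : P T) (hTS : T ⊆ S) :
    ∃ T', T ⊆ T' ∧ T' ⊆ S ∧ P T' ∧ ∀ T'', T' ⊆ T'' → T'' ⊆ S → P T'' → T'' = T' := by
  obtain ⟨T', ⟨hTT', hT'S, hPT'⟩, hmax⟩ := Set.Finite.exists_maximalFor id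
    {T' | T ⊆ T' ∧ T' ⊆ S ∧ P T'} (hS.finite_subsets.subset fun T' h => h.2.1)
    ⟨T, subset_rfl, hTS, hT⟩
  exact ⟨T', hTT', hT'S, hPT', fun T'' h h' hP =>
    subset_antisymm (hmax ⟨hTT'.trans h, h', hP⟩ h) h⟩

lemma SlantSeg.exists_line (hT : SlantSeg T) (hp : p ∈ T) :
    ∃ η c : ℤ, (η = 1 ∨ η = -1) ∧ ∀ r ∈ T, r.2 = η * r.1 + c := by
  rcases hT.2 with h | h
  · exact ⟨1, p.2 - p.1, Or.inl rfl, fun r hr => by linarith [h r hr p hp]⟩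
  · exact ⟨-1, p.2 + p.1, Or.inr rfl, fun r hr => by linarith [h r hr p hp]⟩

lemma isEndpointOf_of_injOn_fst (hinj : Set.InjOn Prod.fst T) (hp : p ∈ T)
    (hext : (∀ r ∈ T, p.1 ≤ r.1) ∨ (∀ r ∈ T, r.1 ≤ p.1)) : IsEndpointOf T p := by
  refine ⟨hp, fun r₁ ⟨hr₁, hpr₁⟩ r₂ ⟨hr₂, hpr₂⟩ => hinj hr₁ hr₂ ?_⟩
  have h₁ : r₁.1 ≠ p.1 := fun h => hpr₁.1 (hinj hp hr₁ h.symm)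
  have h₂ : r₂.1 ≠ p.1 := fun h => hpr₂.1 (hinj hp hr₂ h.symm)
  have b₁ := abs_le.mp hpr₁.2.1
  have b₂ := abs_le.mp hpr₂.2.1
  rcases hext with h | h <;> (have := h r₁ hr₁; have := h r₂ hr₂; omega)

end Segments

lemma SlantSeg.apply_eq_of_fixed_endpoints {X T : Set (ℤ × ℤ)} {f : ℤ × ℤ → ℤ × ℤ}
    (hT : SlantSeg T) (hfin : T.Finite) (hTX : T ⊆ X) (hf : DigContinuous2 2 X f)
    (hend : ∀ p, IsEndpointOf T p → f p = p) {p : ℤ × ℤ} (hp : p ∈ T) : f p = p := by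
  obtain ⟨η, c, hη, hline⟩ := hT.exists_line hp
  have hη_abs : |η| = 1 := by rcases hη with rfl | rfl <;> rfl
  set G : ℤ → ℤ × ℤ := fun t => (t, η * t + c)
  have hGT : ∀ r ∈ T, G r.1 = r := fun r hr => Prod.ext rfl (hline r hr).symm
  have hinj : Set.InjOn Prod.fst T := fun r hr r' hr' h => by rw [← hGT r hr, ← hGT r' hr', h]
  obtain ⟨e₁, he₁, hmin⟩ := Set.exists_min_image T Prod.fst hfin ⟨p, hp⟩
  obtain ⟨e₂, he₂, hmax⟩ := Set.exists_max_image T Prod.fst hfin ⟨p, hp⟩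
  -- being `c₂`-connected, `T` fills the diagonal between its extreme points
  have hG_mem : ∀ t ∈ Set.Icc e₁.1 e₂.1, G t ∈ X := fun t ht => by
    obtain ⟨r, hr, rfl⟩ := hT.1.1.exists_eq_of_le (fun _ _ h => h.2.1) he₁ he₂ ht.1 ht.2
    rw [hGT r hr]; exact hTX hr
  have hG_adj : ∀ t, adj2 2 (G t) (G (t + 1)) := fun t =>
    adj2_two_iff.mpr ⟨fun h => by simpa [G] using congrArg Prod.fst h, by simp [G],
      by simp [G, mul_add, hη_abs]⟩
  have hfix₁ : f (G e₁.1) = G e₁.1 := by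
    rw [hGT e₁ he₁]; exact hend e₁ (isEndpointOf_of_injOn_fst hinj he₁ (Or.inl hmin))
  have hfix₂ : f (G e₂.1) = G e₂.1 := by
    rw [hGT e₂ he₂]; exact hend e₂ (isEndpointOf_of_injOn_fst hinj he₂ (Or.inr hmax))
  have hp_mem : p.1 ∈ Set.Icc e₁.1 e₂.1 := ⟨hmin p hp, hmax p hp⟩
  rw [← hGT p hp]
  refine Prod.ext (hf.apply_eq_of_fixed_ends (π := Prod.fst) (fun _ _ h => h.2.1) hG_adj
    (c := 0) (fun t => (add_zero t).symm) hG_mem hfix₁ hfix₂ hp_mem) ?_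
  have hη_ne : η ≠ 0 := by rintro rfl; simp at hη_abs
  refine mul_left_cancel₀ hη_ne (hf.apply_eq_of_fixed_ends (π := fun z => η * z.2)
    (fun x y h => ?_) hG_adj (c := η * c) (fun t => ?_) hG_mem hfix₁ hfix₂ hp_mem)
  · rw [← mul_sub, abs_mul, hη_abs, one_mul]; exact h.2.2.1
  · rcases hη with rfl | rfl <;> (simp only [G]; ring)

lemma IsComponent2.nontrivial_of_finite {S I : Set (ℤ × ℤ)} (hI : IsComponent2 1 Sᶜ I)
    (hfin : I.Finite) : S.Nontrivial := by
  obtain ⟨q, hq, hmax⟩ := Set.exists_max_image I (fun z => z.1 + z.2) hfin hI.2.1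
  have mem_S : ∀ r : ℤ × ℤ, adj2 1 r q → q.1 + q.2 < r.1 + r.2 → r ∈ S := fun r hr hlt => by
    by_contra hrS
    exact (hmax r (hI.mem_of_adj2 hq hr hrS)).not_gt hlt
  refine ⟨(q.1 + 1, q.2), mem_S _ (by simp [adj2, Prod.ext_iff]) (by simp), (q.1, q.2 + 1),
    mem_S _ (by simp [adj2, Prod.ext_iff]) (by simp), by simp⟩

lemma IsClosedCurve2.exists_adj2 {S : Set (ℤ × ℤ)} (hS : IsClosedCurve2 S) (hnt : S.Nontrivial)
    {p : ℤ × ℤ} (hp : p ∈ S) : ∃ q ∈ S, adj2 2 p q := by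
  obtain ⟨m, -, s, hinj, rfl, hstep⟩ := hS
  obtain ⟨i, rfl⟩ := hp
  refine ⟨s (i + 1), ⟨i + 1, rfl⟩, (hstep i).resolve_left fun h => ?_⟩
  have h10 : (1 : ZMod m) = 0 := by simpa using hinj h
  obtain ⟨_, ⟨j, rfl⟩, _, ⟨k, rfl⟩, hjk⟩ := hnt
  exact hjk (by rw [← mul_one j, ← mul_one k, h10, mul_zero, mul_zero])

lemma DigitallyConvex.add_smul_mem {D : Set (ℤ × ℤ)} (hD : DigitallyConvex D) {p d : ℤ × ℤ}
    {a b t : ℤ} (ha : p + a • d ∈ D) (hb : p + b • d ∈ D) (ht : t ∈ Set.Icc a b) :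
    p + t • d ∈ D := by
  let L : ℝ →ᵃ[ℝ] ℝ × ℝ := AffineMap.lineMap (toR2 p) (toR2 p + toR2 d)
  have hL : ∀ s : ℤ, L s = toR2 (p + s • d) := fun s => by
    simp only [L, AffineMap.lineMap_apply, toR2]
    ext <;> simp <;> ring
  have hseg : toR2 (p + t • d) ∈ segment ℝ (toR2 (p + a • d)) (toR2 (p + b • d)) := by
    rw [← hL, ← hL, ← hL, ← image_segment, segment_eq_Icc (by exact_mod_cast ht.1.trans ht.2)]
    exact ⟨t, ⟨by exact_mod_cast ht.1, by exact_mod_cast ht.2⟩, rfl⟩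
  exact hD _ <|
    segment_subset_convexHull (Set.mem_image_of_mem _ ha) (Set.mem_image_of_mem _ hb) hseg

namespace IsBoundingCurve

variable {X S D : Set (ℤ × ℤ)} {f : ℤ × ℤ → ℤ × ℤ}

lemma exists_interior (h : IsBoundingCurve S D) :
    ∃ I, IsComponent2 1 Sᶜ I ∧ I.Finite ∧ D = S ∪ I := by
  obtain ⟨-, I, E, -, hfin, -, hcomp, hD⟩ := h
  exact ⟨I, (Set.ext_iff.mp hcomp I).mpr (Or.inl rfl), hfin, hD⟩

lemma subset (h : IsBoundingCurve S D) : S ⊆ D := by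
  obtain ⟨I, -, -, rfl⟩ := h.exists_interior
  exact Set.subset_union_left

lemma finite (h : IsBoundingCurve S D) : D.Finite := by
  obtain ⟨I, -, hI, rfl⟩ := h.exists_interior
  obtain ⟨⟨m, hm, s, -, rfl, -⟩, -⟩ := h
  have : NeZero m := ⟨hm.ne'⟩
  exact (Set.finite_range s).union hI

lemma mem_of_adj2_of_notMem (h : IsBoundingCurve S D) {p q : ℤ × ℤ} (hp : p ∈ D) (hq : q ∉ D)
    (hqp : adj2 1 q p) : p ∈ S := by
  obtain ⟨I, hI, -, rfl⟩ := h.exists_interior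
  exact hp.resolve_right fun hpI => hq (Or.inr (hI.mem_of_adj2 hpI hqp fun hqS => hq (Or.inl hqS)))

lemma exists_adj2 (h : IsBoundingCurve S D) {p : ℤ × ℤ} (hp : p ∈ S) : ∃ q ∈ S, adj2 2 p q := by
  obtain ⟨I, hI, hfin, -⟩ := h.exists_interior
  exact h.1.exists_adj2 (hI.nontrivial_of_finite hfin) hp

lemma apply_eq_of_mem_curve (hbd : IsBoundingCurve S D) (hSX : S ⊆ X)
    (hf : DigContinuous2 2 X f)
    (hB₁ : ∀ T, MaxHorizSegOf S T ∨ MaxVertSegOf S T → ∀ p ∈ T, f p = p)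
    (hB₂ : ∀ T, MaxSlantSegOf S T → ∀ p, IsEndpointOf T p → f p = p)
    {p : ℤ × ℤ} (hp : p ∈ S) : f p = p := by
  obtain ⟨q, hq, hpq⟩ := hbd.exists_adj2 hp
  have hSfin : S.Finite := hbd.finite.subset hbd.subset
  have hpqS : {p, q} ⊆ S := Set.insert_subset hp (Set.singleton_subset_iff.mpr hq)
  have hpq_mem : p ∈ ({p, q} : Set (ℤ × ℤ)) := Set.mem_insert p {q}
  have hseg := isSegment2_pair hpq
  by_cases h₂ : p.2 = q.2
  · obtain ⟨T, hpqT, hTS, hT, hmax⟩ := exists_maximal_superset (P := HorizSeg) hSfin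
      ⟨hseg, by rintro _ (rfl | rfl) _ (rfl | rfl) <;> simp [h₂]⟩ hpqS
    exact hB₁ T (Or.inl ⟨hTS, hT, hmax⟩) p (hpqT hpq_mem)
  by_cases h₁ : p.1 = q.1
  · obtain ⟨T, hpqT, hTS, hT, hmax⟩ := exists_maximal_superset (P := VertSeg) hSfin
      ⟨hseg, by rintro _ (rfl | rfl) _ (rfl | rfl) <;> simp [h₁]⟩ hpqS
    exact hB₁ T (Or.inr ⟨hTS, hT, hmax⟩) p (hpqT hpq_mem)
  have hslant : SlantSeg {p, q} := by
    have := abs_le.mp hpq.2.1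
    have := abs_le.mp hpq.2.2.1
    refine ⟨hseg, ?_⟩
    by_cases h : p.1 - q.1 = p.2 - q.2
    · exact Or.inl (by rintro _ (rfl | rfl) _ (rfl | rfl) <;> omega)
    · exact Or.inr (by rintro _ (rfl | rfl) _ (rfl | rfl) <;> omega)
  obtain ⟨T, hpqT, hTS, hT, hmax⟩ := exists_maximal_superset hSfin hslant hpqS
  exact hT.apply_eq_of_fixed_endpoints (hSfin.subset hTS) (hTS.trans hSX) hf
    (hB₂ T ⟨hTS, hT, hmax⟩) (hpqT hpq_mem)

lemma apply_eq_along_axis (hbd : IsBoundingCurve S D) (hconv : DigitallyConvex D)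
    (hDX : D ⊆ X) (hf : DigContinuous2 2 X f) (hS : ∀ z ∈ S, f z = z) {d : ℤ × ℤ}
    (hd : isAxisDir d) {π : ℤ × ℤ → ℤ} (hπ : ∀ x y, adj2 2 x y → |π x - π y| ≤ 1)
    (hπd : ∀ z (t : ℤ), π (z + t • d) = π z + t) {p : ℤ × ℤ} (hp : p ∈ D) :
    π (f p) = π p := by
  set G : ℤ → ℤ × ℤ := fun t => p + t • d
  have hG0 : G 0 ∈ D := by simpa only [G, zero_smul, add_zero] using hp
  have hG_adj : ∀ t, adj2 1 (G (t + 1)) (G t) := fun t => by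
    simpa only [G, add_smul, one_smul, add_assoc] using adj2_one_add_of_isAxisDir hd (G t)
  have hfin : {t | G t ∈ D}.Finite := hbd.finite.preimage fun t _ s _ h => by
    simpa only [G, hπd, add_right_inj] using congrArg π h
  obtain ⟨a, ha, hmin⟩ := Set.exists_min_image _ id hfin ⟨0, hG0⟩
  obtain ⟨b, hb, hmax⟩ := Set.exists_max_image _ id hfin ⟨0, hG0⟩
  have hfa : f (G a) = G a := hS _ <| hbd.mem_of_adj2_of_notMem ha
    (fun h => (hmin (a - 1) h).not_gt (sub_one_lt a))
    (by simpa only [sub_add_cancel] using (hG_adj (a - 1)).symm)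
  have hfb : f (G b) = G b := hS _ <| hbd.mem_of_adj2_of_notMem hb
    (fun h => (hmax (b + 1) h).not_gt (lt_add_one b)) (hG_adj b)
  have := hf.apply_eq_of_fixed_ends hπ (fun t => ((hG_adj t).mono one_le_two).symm)
    (c := π p) (fun t => by rw [hπd, add_comm]) (fun t ht => hDX (hconv.add_smul_mem ha hb ht))
    hfa hfb ⟨hmin 0 hG0, hmax 0 hG0⟩
  simpa only [G, id, zero_smul, add_zero] using this

lemma apply_eq_of_mem (hbd : IsBoundingCurve S D) (hconv : DigitallyConvex D) (hDX : D ⊆ X)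
    (hf : DigContinuous2 2 X f)
    (hB₁ : ∀ T, MaxHorizSegOf S T ∨ MaxVertSegOf S T → ∀ p ∈ T, f p = p)
    (hB₂ : ∀ T, MaxSlantSegOf S T → ∀ p, IsEndpointOf T p → f p = p)
    {p : ℤ × ℤ} (hp : p ∈ D) : f p = p := by
  have hS : ∀ z ∈ S, f z = z := fun z hz =>
    hbd.apply_eq_of_mem_curve (hbd.subset.trans hDX) hf hB₁ hB₂ hz
  exact Prod.ext
    (hbd.apply_eq_along_axis hconv hDX hf hS (d := (1, 0)) (Or.inl ⟨abs_one, rfl⟩)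
      (fun _ _ h => h.2.1) (fun z t => by simp) hp)
    (hbd.apply_eq_along_axis hconv hDX hf hS (d := (0, 1)) (Or.inr ⟨rfl, abs_one⟩)
      (fun _ _ h => h.2.2.1) (fun z t => by simp) hp)

end IsBoundingCurve

theorem corners_c2_general (X : Set (ℤ × ℤ)) (n : ℕ) (V C : Fin n → Set (ℤ × ℤ))
    (hVX : ∀ i, V i ⊆ X)
    (hbd : ∀ i, IsBoundingCurve (C i) (V i))
    (hconv : ∀ i, DigitallyConvex (V i)) :
    FreezingSet2 2 X
      ((X \ ⋃ i, V i) ∪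
        ⋃ i, ({x | ∃ T, (MaxHorizSegOf (C i) T ∨ MaxVertSegOf (C i) T) ∧ x ∈ T} ∪
          {x | ∃ T, MaxSlantSegOf (C i) T ∧ IsEndpointOf T x})) := by
  refine ⟨?_, fun f _ hf hfix x hx => ?_⟩
  · rintro x (⟨hx, -⟩ | hx)
    · exact hx
    obtain ⟨i, ⟨T, hT, hxT⟩ | ⟨T, hT, hxT⟩⟩ := Set.mem_iUnion.mp hx
    · exact hVX i ((hbd i).subset (hT.elim (·.1) (·.1) hxT))
    · exact hVX i ((hbd i).subset (hT.1 hxT.1))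
  by_cases hxV : x ∈ ⋃ i, V i
  · obtain ⟨i, hxi⟩ := Set.mem_iUnion.mp hxV
    exact (hbd i).apply_eq_of_mem (hconv i) (hVX i) hf
      (fun T hT p hp => hfix p (Or.inr (Set.mem_iUnion.mpr ⟨i, Or.inl ⟨T, hT, hp⟩⟩)))
      (fun T hT p hp => hfix p (Or.inr (Set.mem_iUnion.mpr ⟨i, Or.inr ⟨T, hT, hp⟩⟩))) hxi
  · exact hfix x (Or.inl ⟨hx, hxV⟩)

/-- Theorem (freezing sets from unions of thick convex disks, `c₂` case):
if `V 1, …, V n ⊆ X ⊆ ℤ²` are thick convex digital disks with bounding curves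
`C 1, …, C n` and `X' = ⋃ i, V i`, then `(X \ X')` together with, for each `i`, the
union of the maximal horizontal and maximal vertical segments of `C i` and the
endpoints of the maximal slanted segments of `C i`, is a freezing set for `(X, c₂)`. -/
theorem corners_c2 (X : Set (ℤ × ℤ)) (n : ℕ) (V C : Fin n → Set (ℤ × ℤ))
    (hVX : ∀ i, V i ⊆ X)
    (hbd : ∀ i, IsBoundingCurve (C i) (V i))
    (hconv : ∀ i, DigitallyConvex (V i))
    (hthick : ∀ i, ThickWRT (V i) (C i)) :
    FreezingSet2 2 X
      ((X \ ⋃ i, V i) ∪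
        ⋃ i, ({x | ∃ T, (MaxHorizSegOf (C i) T ∨ MaxVertSegOf (C i) T) ∧ x ∈ T} ∪
          {x | ∃ T, MaxSlantSegOf (C i) T ∧ IsEndpointOf T x})) :=
  corners_c2_general X n V C hVX hbd hconv
end

section
/- Let X = ([0,2]_ℤ × [0,2]_ℤ) ∪ ([2,4]_ℤ × [0,3]_ℤ) ⊆ ℤ², where [a,b]_ℤ denotes the set of integers k with a ≤ k ≤ b. Then A′ = {(0,0), (4,0), (4,3), (2,3), (0,2)} is a minimal freezing set for (X, c₁). -/

def Xr : Set (ℤ × ℤ) :=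
  (Set.Icc (0 : ℤ) 2 ×ˢ Set.Icc (0 : ℤ) 2) ∪ (Set.Icc (2 : ℤ) 4 ×ˢ Set.Icc (0 : ℤ) 3)

lemma memXr' {p : ℤ × ℤ} : p ∈ Xr ↔
    (0 ≤ p.1 ∧ p.1 ≤ 2 ∧ 0 ≤ p.2 ∧ p.2 ≤ 2) ∨ (2 ≤ p.1 ∧ p.1 ≤ 4 ∧ 0 ≤ p.2 ∧ p.2 ≤ 3) := by
  simp only [Xr, Set.mem_union, Set.mem_prod, Set.mem_Icc]
  constructor
  · rintro (⟨⟨h1, h2⟩, h3, h4⟩ | ⟨⟨h1, h2⟩, h3, h4⟩) <;> omega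
  · rintro (⟨h1, h2, h3, h4⟩ | ⟨h1, h2, h3, h4⟩) <;> [left; right] <;>
      exact ⟨⟨by omega, by omega⟩, by omega, by omega⟩

lemma memXr {p1 p2 : ℤ} : (p1, p2) ∈ Xr ↔
    (0 ≤ p1 ∧ p1 ≤ 2 ∧ 0 ≤ p2 ∧ p2 ≤ 2) ∨ (2 ≤ p1 ∧ p1 ≤ 4 ∧ 0 ≤ p2 ∧ p2 ≤ 3) :=
  memXr'

/-- Linear form of the ℓ¹ bound `‖p - q‖₁ ≤ k`. -/
def Bd (p q : ℤ × ℤ) (k : ℤ) : Prop :=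
  p.1 - q.1 + (p.2 - q.2) ≤ k ∧ p.1 - q.1 - (p.2 - q.2) ≤ k ∧
  q.1 - p.1 + (p.2 - q.2) ≤ k ∧ q.1 - p.1 - (p.2 - q.2) ≤ k

lemma Bd_trans {p q r : ℤ × ℤ} {k l : ℤ} (h1 : Bd p q k) (h2 : Bd q r l) :
    Bd p r (k + l) := by
  unfold Bd at *
  omega

lemma Bd_elim {p : ℤ × ℤ} {q1 q2 k : ℤ} (h : Bd p (q1, q2) k) :
    p.1 - q1 + (p.2 - q2) ≤ k ∧ p.1 - q1 - (p.2 - q2) ≤ k ∧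
    q1 - p.1 + (p.2 - q2) ≤ k ∧ q1 - p.1 - (p.2 - q2) ≤ k := h

lemma adj1_of' {x1 x2 y1 y2 : ℤ}
    (h : (x1 = y1 ∧ (x2 - y2).natAbs = 1) ∨ (x2 = y2 ∧ (x1 - y1).natAbs = 1)) :
    adj2 1 (x1, x2) (y1, y2) := by
  refine ⟨?_, ?_, ?_, ?_⟩
  · intro he
    rw [Prod.mk.injEq] at he
    omega
  · show |x1 - y1| ≤ 1
    rw [abs_le]; omega
  · show |x2 - y2| ≤ 1
    rw [abs_le]; omega
  · show ((if x1 = y1 then 0 else 1) + (if x2 = y2 then 0 else 1) : ℕ) ≤ 1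
    split_ifs <;> omega

lemma adj1_dest' {x1 x2 y1 y2 : ℤ} (h : adj2 1 (x1, x2) (y1, y2)) :
    (x1 = y1 ∧ (x2 - y2).natAbs = 1) ∨ (x2 = y2 ∧ (x1 - y1).natAbs = 1) := by
  obtain ⟨hne, h1, h2, h3⟩ := h
  have hne' : ¬(x1 = y1 ∧ x2 = y2) := by
    rintro ⟨rfl, rfl⟩; exact hne rfl
  rw [show ((x1, x2) : ℤ × ℤ).1 = x1 from rfl, show ((y1, y2) : ℤ × ℤ).1 = y1 from rfl] at h1 h3
  rw [show ((x1, x2) : ℤ × ℤ).2 = x2 from rfl, show ((y1, y2) : ℤ × ℤ).2 = y2 from rfl] at h2 h3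
  rw [abs_le] at h1 h2
  split_ifs at h3 <;> omega

lemma adj1_symm {x y : ℤ × ℤ} (h : adj2 1 x y) : adj2 1 y x := by
  obtain ⟨x1, x2⟩ := x
  obtain ⟨y1, y2⟩ := y
  have := adj1_dest' h
  exact adj1_of' (by omega)

lemma stepL {X : Set (ℤ × ℤ)} {f : ℤ × ℤ → ℤ × ℤ} (hf : DigContinuous2 1 X f)
    {x y : ℤ × ℤ} (hx : x ∈ X) (hy : y ∈ X) (h : adj2 1 x y) :
    Bd (f x) (f y) 1 := by
  unfold Bd
  rcases hf x hx y hy h with h' | h'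
  · rw [h']; omega
  · obtain ⟨hne, h1, h2, h3⟩ := h'
    rw [abs_le] at h1 h2
    by_cases hc : (f x).1 = (f y).1
    · omega
    · have hc2 : (f x).2 = (f y).2 := by
        by_contra hc2
        rw [if_neg hc, if_neg hc2] at h3
        omega
      omega

lemma not_freezing_Xr (A : Set (ℤ × ℤ)) (a m : ℤ × ℤ) (haA : a ∉ A)
    (haX : a ∈ Xr) (hmX : m ∈ Xr) (hma : m ≠ a)
    (hnbr : ∀ y ∈ Xr, adj2 1 y a → adj2 1 m y) : ¬ FreezingSet2 1 Xr A := by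
  rintro ⟨-, hF⟩
  have hfix : ∀ b ∈ A, (fun p => if p = a then m else p) b = b := by
    intro b hb
    have hba : b ≠ a := fun h => haA (h ▸ hb)
    simp [hba]
  have hmaps : Set.MapsTo (fun p => if p = a then m else p) Xr Xr := by
    intro p hp
    by_cases h : p = a
    · simpa [h] using hmX
    · simpa [h] using hp
  have hcont : DigContinuous2 1 Xr (fun p => if p = a then m else p) := by
    intro x hx y hy hxy
    by_cases hxa : x = a <;> by_cases hya : y = a
    · exact absurd (hxa.trans hya.symm) hxy.1
    · simp only [if_pos hxa, if_neg hya]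
      exact Or.inr (hnbr y hy (adj1_symm (hxa ▸ hxy)))
    · simp only [if_neg hxa, if_pos hya]
      exact Or.inr (adj1_symm (hnbr x hx (hya ▸ hxy)))
    · simp only [if_neg hxa, if_neg hya]
      exact Or.inr hxy
  have := hF _ hmaps hcont hfix a haX
  simp only [if_pos rfl] at this
  exact hma this

/-- `{(0,0), (4,0), (4,3), (2,3), (0,2)}` is a minimal freezing set for
`(([0,2]_ℤ × [0,2]_ℤ) ∪ ([2,4]_ℤ × [0,3]_ℤ), c₁)`. -/
theorem minimal_freezing_union_rectangles :
    MinFreezingSet2 1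
      ((Set.Icc (0 : ℤ) 2 ×ˢ Set.Icc (0 : ℤ) 2) ∪ (Set.Icc (2 : ℤ) 4 ×ˢ Set.Icc (0 : ℤ) 3))
      {(0, 0), (4, 0), (4, 3), (2, 3), (0, 2)} := by
  show MinFreezingSet2 1 Xr {(0, 0), (4, 0), (4, 3), (2, 3), (0, 2)}
  constructor
  · constructor
    · intro a ha
      simp only [Set.mem_insert_iff, Set.mem_singleton_iff] at ha
      rcases ha with rfl | rfl | rfl | rfl | rfl <;> exact memXr.mpr (by decide)
    · intro f hmap hcont hfix
      have a1 : f ((0:ℤ),(0:ℤ)) = ((0:ℤ),(0:ℤ)) := hfix _ (by simp)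
      have a2 : f ((4:ℤ),(0:ℤ)) = ((4:ℤ),(0:ℤ)) := hfix _ (by simp)
      have a3 : f ((4:ℤ),(3:ℤ)) = ((4:ℤ),(3:ℤ)) := hfix _ (by simp)
      have a4 : f ((2:ℤ),(3:ℤ)) = ((2:ℤ),(3:ℤ)) := hfix _ (by simp)
      have a5 : f ((0:ℤ),(2:ℤ)) = ((0:ℤ),(2:ℤ)) := hfix _ (by simp)
      have hp00 : f ((0:ℤ),(0:ℤ)) = ((0:ℤ),(0:ℤ)) := a1
      have hp01 : f ((0:ℤ),(1:ℤ)) = ((0:ℤ),(1:ℤ)) := by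
        have hm := memXr'.mp (hmap (show ((0:ℤ),(1:ℤ)) ∈ Xr from memXr.mpr (by decide)))
        have c1 := stepL hcont (show ((0:ℤ),(1:ℤ)) ∈ Xr from memXr.mpr (by decide)) (show ((0:ℤ),(0:ℤ)) ∈ Xr from memXr.mpr (by decide)) (adj1_of' (by decide))
        rw [a1] at c1
        have d1 := Bd_elim c1
        have c2 := stepL hcont (show ((0:ℤ),(1:ℤ)) ∈ Xr from memXr.mpr (by decide)) (show ((0:ℤ),(2:ℤ)) ∈ Xr from memXr.mpr (by decide)) (adj1_of' (by decide))
        rw [a5] at c2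
        have d2 := Bd_elim c2
        clear c1 c2
        refine Prod.ext_iff.mpr ⟨?_, ?_⟩
        · show (f ((0:ℤ),(1:ℤ))).1 = 0; omega
        · show (f ((0:ℤ),(1:ℤ))).2 = 1; omega
      have hp02 : f ((0:ℤ),(2:ℤ)) = ((0:ℤ),(2:ℤ)) := a5
      have hp10 : f ((1:ℤ),(0:ℤ)) = ((1:ℤ),(0:ℤ)) := by
        have hm := memXr'.mp (hmap (show ((1:ℤ),(0:ℤ)) ∈ Xr from memXr.mpr (by decide)))
        have c1 := stepL hcont (show ((1:ℤ),(0:ℤ)) ∈ Xr from memXr.mpr (by decide)) (show ((0:ℤ),(0:ℤ)) ∈ Xr from memXr.mpr (by decide)) (adj1_of' (by decide))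
        rw [a1] at c1
        have d1 := Bd_elim c1
        have c2 := stepL hcont (show ((1:ℤ),(0:ℤ)) ∈ Xr from memXr.mpr (by decide)) (show ((2:ℤ),(0:ℤ)) ∈ Xr from memXr.mpr (by decide)) (adj1_of' (by decide))
        have c2 := Bd_trans c2 (stepL hcont (show ((2:ℤ),(0:ℤ)) ∈ Xr from memXr.mpr (by decide)) (show ((3:ℤ),(0:ℤ)) ∈ Xr from memXr.mpr (by decide)) (adj1_of' (by decide)))
        have c2 := Bd_trans c2 (stepL hcont (show ((3:ℤ),(0:ℤ)) ∈ Xr from memXr.mpr (by decide)) (show ((4:ℤ),(0:ℤ)) ∈ Xr from memXr.mpr (by decide)) (adj1_of' (by decide)))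
        rw [a2] at c2
        have d2 := Bd_elim c2
        clear c1 c2
        refine Prod.ext_iff.mpr ⟨?_, ?_⟩
        · show (f ((1:ℤ),(0:ℤ))).1 = 1; omega
        · show (f ((1:ℤ),(0:ℤ))).2 = 0; omega
      have hp11 : f ((1:ℤ),(1:ℤ)) = ((1:ℤ),(1:ℤ)) := by
        have hm := memXr'.mp (hmap (show ((1:ℤ),(1:ℤ)) ∈ Xr from memXr.mpr (by decide)))
        have c1 := stepL hcont (show ((1:ℤ),(1:ℤ)) ∈ Xr from memXr.mpr (by decide)) (show ((0:ℤ),(1:ℤ)) ∈ Xr from memXr.mpr (by decide)) (adj1_of' (by decide))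
        have c1 := Bd_trans c1 (stepL hcont (show ((0:ℤ),(1:ℤ)) ∈ Xr from memXr.mpr (by decide)) (show ((0:ℤ),(0:ℤ)) ∈ Xr from memXr.mpr (by decide)) (adj1_of' (by decide)))
        rw [a1] at c1
        have d1 := Bd_elim c1
        have c2 := stepL hcont (show ((1:ℤ),(1:ℤ)) ∈ Xr from memXr.mpr (by decide)) (show ((1:ℤ),(0:ℤ)) ∈ Xr from memXr.mpr (by decide)) (adj1_of' (by decide))
        have c2 := Bd_trans c2 (stepL hcont (show ((1:ℤ),(0:ℤ)) ∈ Xr from memXr.mpr (by decide)) (show ((2:ℤ),(0:ℤ)) ∈ Xr from memXr.mpr (by decide)) (adj1_of' (by decide)))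
        have c2 := Bd_trans c2 (stepL hcont (show ((2:ℤ),(0:ℤ)) ∈ Xr from memXr.mpr (by decide)) (show ((3:ℤ),(0:ℤ)) ∈ Xr from memXr.mpr (by decide)) (adj1_of' (by decide)))
        have c2 := Bd_trans c2 (stepL hcont (show ((3:ℤ),(0:ℤ)) ∈ Xr from memXr.mpr (by decide)) (show ((4:ℤ),(0:ℤ)) ∈ Xr from memXr.mpr (by decide)) (adj1_of' (by decide)))
        rw [a2] at c2
        have d2 := Bd_elim c2
        have c3 := stepL hcont (show ((1:ℤ),(1:ℤ)) ∈ Xr from memXr.mpr (by decide)) (show ((1:ℤ),(2:ℤ)) ∈ Xr from memXr.mpr (by decide)) (adj1_of' (by decide))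
        have c3 := Bd_trans c3 (stepL hcont (show ((1:ℤ),(2:ℤ)) ∈ Xr from memXr.mpr (by decide)) (show ((2:ℤ),(2:ℤ)) ∈ Xr from memXr.mpr (by decide)) (adj1_of' (by decide)))
        have c3 := Bd_trans c3 (stepL hcont (show ((2:ℤ),(2:ℤ)) ∈ Xr from memXr.mpr (by decide)) (show ((2:ℤ),(3:ℤ)) ∈ Xr from memXr.mpr (by decide)) (adj1_of' (by decide)))
        have c3 := Bd_trans c3 (stepL hcont (show ((2:ℤ),(3:ℤ)) ∈ Xr from memXr.mpr (by decide)) (show ((3:ℤ),(3:ℤ)) ∈ Xr from memXr.mpr (by decide)) (adj1_of' (by decide)))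
        have c3 := Bd_trans c3 (stepL hcont (show ((3:ℤ),(3:ℤ)) ∈ Xr from memXr.mpr (by decide)) (show ((4:ℤ),(3:ℤ)) ∈ Xr from memXr.mpr (by decide)) (adj1_of' (by decide)))
        rw [a3] at c3
        have d3 := Bd_elim c3
        have c4 := stepL hcont (show ((1:ℤ),(1:ℤ)) ∈ Xr from memXr.mpr (by decide)) (show ((0:ℤ),(1:ℤ)) ∈ Xr from memXr.mpr (by decide)) (adj1_of' (by decide))
        have c4 := Bd_trans c4 (stepL hcont (show ((0:ℤ),(1:ℤ)) ∈ Xr from memXr.mpr (by decide)) (show ((0:ℤ),(2:ℤ)) ∈ Xr from memXr.mpr (by decide)) (adj1_of' (by decide)))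
        rw [a5] at c4
        have d4 := Bd_elim c4
        clear c1 c2 c3 c4
        refine Prod.ext_iff.mpr ⟨?_, ?_⟩
        · show (f ((1:ℤ),(1:ℤ))).1 = 1; omega
        · show (f ((1:ℤ),(1:ℤ))).2 = 1; omega
      have hp12 : f ((1:ℤ),(2:ℤ)) = ((1:ℤ),(2:ℤ)) := by
        have hm := memXr'.mp (hmap (show ((1:ℤ),(2:ℤ)) ∈ Xr from memXr.mpr (by decide)))
        have c1 := stepL hcont (show ((1:ℤ),(2:ℤ)) ∈ Xr from memXr.mpr (by decide)) (show ((2:ℤ),(2:ℤ)) ∈ Xr from memXr.mpr (by decide)) (adj1_of' (by decide))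
        have c1 := Bd_trans c1 (stepL hcont (show ((2:ℤ),(2:ℤ)) ∈ Xr from memXr.mpr (by decide)) (show ((2:ℤ),(3:ℤ)) ∈ Xr from memXr.mpr (by decide)) (adj1_of' (by decide)))
        have c1 := Bd_trans c1 (stepL hcont (show ((2:ℤ),(3:ℤ)) ∈ Xr from memXr.mpr (by decide)) (show ((3:ℤ),(3:ℤ)) ∈ Xr from memXr.mpr (by decide)) (adj1_of' (by decide)))
        have c1 := Bd_trans c1 (stepL hcont (show ((3:ℤ),(3:ℤ)) ∈ Xr from memXr.mpr (by decide)) (show ((4:ℤ),(3:ℤ)) ∈ Xr from memXr.mpr (by decide)) (adj1_of' (by decide)))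
        rw [a3] at c1
        have d1 := Bd_elim c1
        have c2 := stepL hcont (show ((1:ℤ),(2:ℤ)) ∈ Xr from memXr.mpr (by decide)) (show ((0:ℤ),(2:ℤ)) ∈ Xr from memXr.mpr (by decide)) (adj1_of' (by decide))
        rw [a5] at c2
        have d2 := Bd_elim c2
        clear c1 c2
        refine Prod.ext_iff.mpr ⟨?_, ?_⟩
        · show (f ((1:ℤ),(2:ℤ))).1 = 1; omega
        · show (f ((1:ℤ),(2:ℤ))).2 = 2; omega
      have hp20 : f ((2:ℤ),(0:ℤ)) = ((2:ℤ),(0:ℤ)) := by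
        have hm := memXr'.mp (hmap (show ((2:ℤ),(0:ℤ)) ∈ Xr from memXr.mpr (by decide)))
        have c1 := stepL hcont (show ((2:ℤ),(0:ℤ)) ∈ Xr from memXr.mpr (by decide)) (show ((1:ℤ),(0:ℤ)) ∈ Xr from memXr.mpr (by decide)) (adj1_of' (by decide))
        have c1 := Bd_trans c1 (stepL hcont (show ((1:ℤ),(0:ℤ)) ∈ Xr from memXr.mpr (by decide)) (show ((0:ℤ),(0:ℤ)) ∈ Xr from memXr.mpr (by decide)) (adj1_of' (by decide)))
        rw [a1] at c1
        have d1 := Bd_elim c1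
        have c2 := stepL hcont (show ((2:ℤ),(0:ℤ)) ∈ Xr from memXr.mpr (by decide)) (show ((3:ℤ),(0:ℤ)) ∈ Xr from memXr.mpr (by decide)) (adj1_of' (by decide))
        have c2 := Bd_trans c2 (stepL hcont (show ((3:ℤ),(0:ℤ)) ∈ Xr from memXr.mpr (by decide)) (show ((4:ℤ),(0:ℤ)) ∈ Xr from memXr.mpr (by decide)) (adj1_of' (by decide)))
        rw [a2] at c2
        have d2 := Bd_elim c2
        clear c1 c2
        refine Prod.ext_iff.mpr ⟨?_, ?_⟩
        · show (f ((2:ℤ),(0:ℤ))).1 = 2; omega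
        · show (f ((2:ℤ),(0:ℤ))).2 = 0; omega
      have hp21 : f ((2:ℤ),(1:ℤ)) = ((2:ℤ),(1:ℤ)) := by
        have hm := memXr'.mp (hmap (show ((2:ℤ),(1:ℤ)) ∈ Xr from memXr.mpr (by decide)))
        have c1 := stepL hcont (show ((2:ℤ),(1:ℤ)) ∈ Xr from memXr.mpr (by decide)) (show ((1:ℤ),(1:ℤ)) ∈ Xr from memXr.mpr (by decide)) (adj1_of' (by decide))
        have c1 := Bd_trans c1 (stepL hcont (show ((1:ℤ),(1:ℤ)) ∈ Xr from memXr.mpr (by decide)) (show ((0:ℤ),(1:ℤ)) ∈ Xr from memXr.mpr (by decide)) (adj1_of' (by decide)))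
        have c1 := Bd_trans c1 (stepL hcont (show ((0:ℤ),(1:ℤ)) ∈ Xr from memXr.mpr (by decide)) (show ((0:ℤ),(0:ℤ)) ∈ Xr from memXr.mpr (by decide)) (adj1_of' (by decide)))
        rw [a1] at c1
        have d1 := Bd_elim c1
        have c2 := stepL hcont (show ((2:ℤ),(1:ℤ)) ∈ Xr from memXr.mpr (by decide)) (show ((2:ℤ),(0:ℤ)) ∈ Xr from memXr.mpr (by decide)) (adj1_of' (by decide))
        have c2 := Bd_trans c2 (stepL hcont (show ((2:ℤ),(0:ℤ)) ∈ Xr from memXr.mpr (by decide)) (show ((3:ℤ),(0:ℤ)) ∈ Xr from memXr.mpr (by decide)) (adj1_of' (by decide)))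
        have c2 := Bd_trans c2 (stepL hcont (show ((3:ℤ),(0:ℤ)) ∈ Xr from memXr.mpr (by decide)) (show ((4:ℤ),(0:ℤ)) ∈ Xr from memXr.mpr (by decide)) (adj1_of' (by decide)))
        rw [a2] at c2
        have d2 := Bd_elim c2
        have c3 := stepL hcont (show ((2:ℤ),(1:ℤ)) ∈ Xr from memXr.mpr (by decide)) (show ((2:ℤ),(2:ℤ)) ∈ Xr from memXr.mpr (by decide)) (adj1_of' (by decide))
        have c3 := Bd_trans c3 (stepL hcont (show ((2:ℤ),(2:ℤ)) ∈ Xr from memXr.mpr (by decide)) (show ((2:ℤ),(3:ℤ)) ∈ Xr from memXr.mpr (by decide)) (adj1_of' (by decide)))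
        rw [a4] at c3
        have d3 := Bd_elim c3
        clear c1 c2 c3
        refine Prod.ext_iff.mpr ⟨?_, ?_⟩
        · show (f ((2:ℤ),(1:ℤ))).1 = 2; omega
        · show (f ((2:ℤ),(1:ℤ))).2 = 1; omega
      have hp22 : f ((2:ℤ),(2:ℤ)) = ((2:ℤ),(2:ℤ)) := by
        have hm := memXr'.mp (hmap (show ((2:ℤ),(2:ℤ)) ∈ Xr from memXr.mpr (by decide)))
        have c1 := stepL hcont (show ((2:ℤ),(2:ℤ)) ∈ Xr from memXr.mpr (by decide)) (show ((1:ℤ),(2:ℤ)) ∈ Xr from memXr.mpr (by decide)) (adj1_of' (by decide))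
        have c1 := Bd_trans c1 (stepL hcont (show ((1:ℤ),(2:ℤ)) ∈ Xr from memXr.mpr (by decide)) (show ((0:ℤ),(2:ℤ)) ∈ Xr from memXr.mpr (by decide)) (adj1_of' (by decide)))
        have c1 := Bd_trans c1 (stepL hcont (show ((0:ℤ),(2:ℤ)) ∈ Xr from memXr.mpr (by decide)) (show ((0:ℤ),(1:ℤ)) ∈ Xr from memXr.mpr (by decide)) (adj1_of' (by decide)))
        have c1 := Bd_trans c1 (stepL hcont (show ((0:ℤ),(1:ℤ)) ∈ Xr from memXr.mpr (by decide)) (show ((0:ℤ),(0:ℤ)) ∈ Xr from memXr.mpr (by decide)) (adj1_of' (by decide)))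
        rw [a1] at c1
        have d1 := Bd_elim c1
        have c2 := stepL hcont (show ((2:ℤ),(2:ℤ)) ∈ Xr from memXr.mpr (by decide)) (show ((2:ℤ),(3:ℤ)) ∈ Xr from memXr.mpr (by decide)) (adj1_of' (by decide))
        rw [a4] at c2
        have d2 := Bd_elim c2
        clear c1 c2
        refine Prod.ext_iff.mpr ⟨?_, ?_⟩
        · show (f ((2:ℤ),(2:ℤ))).1 = 2; omega
        · show (f ((2:ℤ),(2:ℤ))).2 = 2; omega
      have hp23 : f ((2:ℤ),(3:ℤ)) = ((2:ℤ),(3:ℤ)) := a4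
      have hp30 : f ((3:ℤ),(0:ℤ)) = ((3:ℤ),(0:ℤ)) := by
        have hm := memXr'.mp (hmap (show ((3:ℤ),(0:ℤ)) ∈ Xr from memXr.mpr (by decide)))
        have c1 := stepL hcont (show ((3:ℤ),(0:ℤ)) ∈ Xr from memXr.mpr (by decide)) (show ((2:ℤ),(0:ℤ)) ∈ Xr from memXr.mpr (by decide)) (adj1_of' (by decide))
        have c1 := Bd_trans c1 (stepL hcont (show ((2:ℤ),(0:ℤ)) ∈ Xr from memXr.mpr (by decide)) (show ((1:ℤ),(0:ℤ)) ∈ Xr from memXr.mpr (by decide)) (adj1_of' (by decide)))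
        have c1 := Bd_trans c1 (stepL hcont (show ((1:ℤ),(0:ℤ)) ∈ Xr from memXr.mpr (by decide)) (show ((0:ℤ),(0:ℤ)) ∈ Xr from memXr.mpr (by decide)) (adj1_of' (by decide)))
        rw [a1] at c1
        have d1 := Bd_elim c1
        have c2 := stepL hcont (show ((3:ℤ),(0:ℤ)) ∈ Xr from memXr.mpr (by decide)) (show ((4:ℤ),(0:ℤ)) ∈ Xr from memXr.mpr (by decide)) (adj1_of' (by decide))
        rw [a2] at c2
        have d2 := Bd_elim c2
        clear c1 c2
        refine Prod.ext_iff.mpr ⟨?_, ?_⟩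
        · show (f ((3:ℤ),(0:ℤ))).1 = 3; omega
        · show (f ((3:ℤ),(0:ℤ))).2 = 0; omega
      have hp31 : f ((3:ℤ),(1:ℤ)) = ((3:ℤ),(1:ℤ)) := by
        have hm := memXr'.mp (hmap (show ((3:ℤ),(1:ℤ)) ∈ Xr from memXr.mpr (by decide)))
        have c1 := stepL hcont (show ((3:ℤ),(1:ℤ)) ∈ Xr from memXr.mpr (by decide)) (show ((2:ℤ),(1:ℤ)) ∈ Xr from memXr.mpr (by decide)) (adj1_of' (by decide))
        have c1 := Bd_trans c1 (stepL hcont (show ((2:ℤ),(1:ℤ)) ∈ Xr from memXr.mpr (by decide)) (show ((1:ℤ),(1:ℤ)) ∈ Xr from memXr.mpr (by decide)) (adj1_of' (by decide)))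
        have c1 := Bd_trans c1 (stepL hcont (show ((1:ℤ),(1:ℤ)) ∈ Xr from memXr.mpr (by decide)) (show ((0:ℤ),(1:ℤ)) ∈ Xr from memXr.mpr (by decide)) (adj1_of' (by decide)))
        have c1 := Bd_trans c1 (stepL hcont (show ((0:ℤ),(1:ℤ)) ∈ Xr from memXr.mpr (by decide)) (show ((0:ℤ),(0:ℤ)) ∈ Xr from memXr.mpr (by decide)) (adj1_of' (by decide)))
        rw [a1] at c1
        have d1 := Bd_elim c1
        have c2 := stepL hcont (show ((3:ℤ),(1:ℤ)) ∈ Xr from memXr.mpr (by decide)) (show ((3:ℤ),(0:ℤ)) ∈ Xr from memXr.mpr (by decide)) (adj1_of' (by decide))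
        have c2 := Bd_trans c2 (stepL hcont (show ((3:ℤ),(0:ℤ)) ∈ Xr from memXr.mpr (by decide)) (show ((4:ℤ),(0:ℤ)) ∈ Xr from memXr.mpr (by decide)) (adj1_of' (by decide)))
        rw [a2] at c2
        have d2 := Bd_elim c2
        have c3 := stepL hcont (show ((3:ℤ),(1:ℤ)) ∈ Xr from memXr.mpr (by decide)) (show ((3:ℤ),(2:ℤ)) ∈ Xr from memXr.mpr (by decide)) (adj1_of' (by decide))
        have c3 := Bd_trans c3 (stepL hcont (show ((3:ℤ),(2:ℤ)) ∈ Xr from memXr.mpr (by decide)) (show ((3:ℤ),(3:ℤ)) ∈ Xr from memXr.mpr (by decide)) (adj1_of' (by decide)))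
        have c3 := Bd_trans c3 (stepL hcont (show ((3:ℤ),(3:ℤ)) ∈ Xr from memXr.mpr (by decide)) (show ((4:ℤ),(3:ℤ)) ∈ Xr from memXr.mpr (by decide)) (adj1_of' (by decide)))
        rw [a3] at c3
        have d3 := Bd_elim c3
        have c4 := stepL hcont (show ((3:ℤ),(1:ℤ)) ∈ Xr from memXr.mpr (by decide)) (show ((2:ℤ),(1:ℤ)) ∈ Xr from memXr.mpr (by decide)) (adj1_of' (by decide))
        have c4 := Bd_trans c4 (stepL hcont (show ((2:ℤ),(1:ℤ)) ∈ Xr from memXr.mpr (by decide)) (show ((2:ℤ),(2:ℤ)) ∈ Xr from memXr.mpr (by decide)) (adj1_of' (by decide)))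
        have c4 := Bd_trans c4 (stepL hcont (show ((2:ℤ),(2:ℤ)) ∈ Xr from memXr.mpr (by decide)) (show ((2:ℤ),(3:ℤ)) ∈ Xr from memXr.mpr (by decide)) (adj1_of' (by decide)))
        rw [a4] at c4
        have d4 := Bd_elim c4
        clear c1 c2 c3 c4
        refine Prod.ext_iff.mpr ⟨?_, ?_⟩
        · show (f ((3:ℤ),(1:ℤ))).1 = 3; omega
        · show (f ((3:ℤ),(1:ℤ))).2 = 1; omega
      have hp32 : f ((3:ℤ),(2:ℤ)) = ((3:ℤ),(2:ℤ)) := by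
        have hm := memXr'.mp (hmap (show ((3:ℤ),(2:ℤ)) ∈ Xr from memXr.mpr (by decide)))
        have c1 := stepL hcont (show ((3:ℤ),(2:ℤ)) ∈ Xr from memXr.mpr (by decide)) (show ((3:ℤ),(1:ℤ)) ∈ Xr from memXr.mpr (by decide)) (adj1_of' (by decide))
        have c1 := Bd_trans c1 (stepL hcont (show ((3:ℤ),(1:ℤ)) ∈ Xr from memXr.mpr (by decide)) (show ((3:ℤ),(0:ℤ)) ∈ Xr from memXr.mpr (by decide)) (adj1_of' (by decide)))
        have c1 := Bd_trans c1 (stepL hcont (show ((3:ℤ),(0:ℤ)) ∈ Xr from memXr.mpr (by decide)) (show ((4:ℤ),(0:ℤ)) ∈ Xr from memXr.mpr (by decide)) (adj1_of' (by decide)))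
        rw [a2] at c1
        have d1 := Bd_elim c1
        have c2 := stepL hcont (show ((3:ℤ),(2:ℤ)) ∈ Xr from memXr.mpr (by decide)) (show ((3:ℤ),(3:ℤ)) ∈ Xr from memXr.mpr (by decide)) (adj1_of' (by decide))
        have c2 := Bd_trans c2 (stepL hcont (show ((3:ℤ),(3:ℤ)) ∈ Xr from memXr.mpr (by decide)) (show ((4:ℤ),(3:ℤ)) ∈ Xr from memXr.mpr (by decide)) (adj1_of' (by decide)))
        rw [a3] at c2
        have d2 := Bd_elim c2
        have c3 := stepL hcont (show ((3:ℤ),(2:ℤ)) ∈ Xr from memXr.mpr (by decide)) (show ((2:ℤ),(2:ℤ)) ∈ Xr from memXr.mpr (by decide)) (adj1_of' (by decide))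
        have c3 := Bd_trans c3 (stepL hcont (show ((2:ℤ),(2:ℤ)) ∈ Xr from memXr.mpr (by decide)) (show ((1:ℤ),(2:ℤ)) ∈ Xr from memXr.mpr (by decide)) (adj1_of' (by decide)))
        have c3 := Bd_trans c3 (stepL hcont (show ((1:ℤ),(2:ℤ)) ∈ Xr from memXr.mpr (by decide)) (show ((0:ℤ),(2:ℤ)) ∈ Xr from memXr.mpr (by decide)) (adj1_of' (by decide)))
        rw [a5] at c3
        have d3 := Bd_elim c3
        clear c1 c2 c3
        refine Prod.ext_iff.mpr ⟨?_, ?_⟩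
        · show (f ((3:ℤ),(2:ℤ))).1 = 3; omega
        · show (f ((3:ℤ),(2:ℤ))).2 = 2; omega
      have hp33 : f ((3:ℤ),(3:ℤ)) = ((3:ℤ),(3:ℤ)) := by
        have hm := memXr'.mp (hmap (show ((3:ℤ),(3:ℤ)) ∈ Xr from memXr.mpr (by decide)))
        have c1 := stepL hcont (show ((3:ℤ),(3:ℤ)) ∈ Xr from memXr.mpr (by decide)) (show ((4:ℤ),(3:ℤ)) ∈ Xr from memXr.mpr (by decide)) (adj1_of' (by decide))
        rw [a3] at c1
        have d1 := Bd_elim c1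
        have c2 := stepL hcont (show ((3:ℤ),(3:ℤ)) ∈ Xr from memXr.mpr (by decide)) (show ((2:ℤ),(3:ℤ)) ∈ Xr from memXr.mpr (by decide)) (adj1_of' (by decide))
        rw [a4] at c2
        have d2 := Bd_elim c2
        clear c1 c2
        refine Prod.ext_iff.mpr ⟨?_, ?_⟩
        · show (f ((3:ℤ),(3:ℤ))).1 = 3; omega
        · show (f ((3:ℤ),(3:ℤ))).2 = 3; omega
      have hp40 : f ((4:ℤ),(0:ℤ)) = ((4:ℤ),(0:ℤ)) := a2
      have hp41 : f ((4:ℤ),(1:ℤ)) = ((4:ℤ),(1:ℤ)) := by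
        have hm := memXr'.mp (hmap (show ((4:ℤ),(1:ℤ)) ∈ Xr from memXr.mpr (by decide)))
        have c1 := stepL hcont (show ((4:ℤ),(1:ℤ)) ∈ Xr from memXr.mpr (by decide)) (show ((4:ℤ),(0:ℤ)) ∈ Xr from memXr.mpr (by decide)) (adj1_of' (by decide))
        rw [a2] at c1
        have d1 := Bd_elim c1
        have c2 := stepL hcont (show ((4:ℤ),(1:ℤ)) ∈ Xr from memXr.mpr (by decide)) (show ((4:ℤ),(2:ℤ)) ∈ Xr from memXr.mpr (by decide)) (adj1_of' (by decide))
        have c2 := Bd_trans c2 (stepL hcont (show ((4:ℤ),(2:ℤ)) ∈ Xr from memXr.mpr (by decide)) (show ((4:ℤ),(3:ℤ)) ∈ Xr from memXr.mpr (by decide)) (adj1_of' (by decide)))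
        rw [a3] at c2
        have d2 := Bd_elim c2
        clear c1 c2
        refine Prod.ext_iff.mpr ⟨?_, ?_⟩
        · show (f ((4:ℤ),(1:ℤ))).1 = 4; omega
        · show (f ((4:ℤ),(1:ℤ))).2 = 1; omega
      have hp42 : f ((4:ℤ),(2:ℤ)) = ((4:ℤ),(2:ℤ)) := by
        have hm := memXr'.mp (hmap (show ((4:ℤ),(2:ℤ)) ∈ Xr from memXr.mpr (by decide)))
        have c1 := stepL hcont (show ((4:ℤ),(2:ℤ)) ∈ Xr from memXr.mpr (by decide)) (show ((4:ℤ),(1:ℤ)) ∈ Xr from memXr.mpr (by decide)) (adj1_of' (by decide))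
        have c1 := Bd_trans c1 (stepL hcont (show ((4:ℤ),(1:ℤ)) ∈ Xr from memXr.mpr (by decide)) (show ((4:ℤ),(0:ℤ)) ∈ Xr from memXr.mpr (by decide)) (adj1_of' (by decide)))
        rw [a2] at c1
        have d1 := Bd_elim c1
        have c2 := stepL hcont (show ((4:ℤ),(2:ℤ)) ∈ Xr from memXr.mpr (by decide)) (show ((4:ℤ),(3:ℤ)) ∈ Xr from memXr.mpr (by decide)) (adj1_of' (by decide))
        rw [a3] at c2
        have d2 := Bd_elim c2
        clear c1 c2
        refine Prod.ext_iff.mpr ⟨?_, ?_⟩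
        · show (f ((4:ℤ),(2:ℤ))).1 = 4; omega
        · show (f ((4:ℤ),(2:ℤ))).2 = 2; omega
      have hp43 : f ((4:ℤ),(3:ℤ)) = ((4:ℤ),(3:ℤ)) := a3
      intro x hx
      obtain ⟨u, v⟩ := x
      rcases memXr.mp hx with ⟨h1, h2, h3, h4⟩ | ⟨h1, h2, h3, h4⟩ <;>
        interval_cases u <;> interval_cases v <;>
        first | exact hp00 | exact hp01 | exact hp02 | exact hp10 | exact hp11 | exact hp12 | exact hp20 | exact hp21 | exact hp22 | exact hp23 | exact hp30 | exact hp31 | exact hp32 | exact hp33 | exact hp40 | exact hp41 | exact hp42 | exact hp43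
  · intro A'' hss
    obtain ⟨a, haA, haA''⟩ := Set.exists_of_ssubset hss
    have ha5 : a = ((0:ℤ),(0:ℤ)) ∨ a = ((4:ℤ),(0:ℤ)) ∨ a = ((4:ℤ),(3:ℤ)) ∨ a = ((2:ℤ),(3:ℤ)) ∨ a = ((0:ℤ),(2:ℤ)) := by
      simpa using haA
    rcases ha5 with rfl | rfl | rfl | rfl | rfl
    · refine not_freezing_Xr _ ((0:ℤ),(0:ℤ)) ((1:ℤ),(1:ℤ)) haA'' (memXr.mpr (by decide)) (memXr.mpr (by decide)) (by decide) ?_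
      intro y hy hadj
      obtain ⟨y1, y2⟩ := y
      have hd := adj1_dest' hadj
      have hm := memXr.mp hy
      exact adj1_of' (by omega)
    · refine not_freezing_Xr _ ((4:ℤ),(0:ℤ)) ((3:ℤ),(1:ℤ)) haA'' (memXr.mpr (by decide)) (memXr.mpr (by decide)) (by decide) ?_
      intro y hy hadj
      obtain ⟨y1, y2⟩ := y
      have hd := adj1_dest' hadj
      have hm := memXr.mp hy
      exact adj1_of' (by omega)
    · refine not_freezing_Xr _ ((4:ℤ),(3:ℤ)) ((3:ℤ),(2:ℤ)) haA'' (memXr.mpr (by decide)) (memXr.mpr (by decide)) (by decide) ?_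
      intro y hy hadj
      obtain ⟨y1, y2⟩ := y
      have hd := adj1_dest' hadj
      have hm := memXr.mp hy
      exact adj1_of' (by omega)
    · refine not_freezing_Xr _ ((2:ℤ),(3:ℤ)) ((3:ℤ),(2:ℤ)) haA'' (memXr.mpr (by decide)) (memXr.mpr (by decide)) (by decide) ?_
      intro y hy hadj
      obtain ⟨y1, y2⟩ := y
      have hd := adj1_dest' hadj
      have hm := memXr.mp hy
      exact adj1_of' (by omega)
    · refine not_freezing_Xr _ ((0:ℤ),(2:ℤ)) ((1:ℤ),(1:ℤ)) haA'' (memXr.mpr (by decide)) (memXr.mpr (by decide)) (by decide) ?_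
      intro y hy hadj
      obtain ⟨y1, y2⟩ := y
      have hd := adj1_dest' hadj
      have hm := memXr.mp hy
      exact adj1_of' (by omega)
end

section
/- Let X = [0,1]_ℤ³ = {0,1}³ ⊆ ℤ³ and let A = {(0,0,0), (0,1,1), (1,0,1), (1,1,0)}. Then A is a minimal freezing set for (X, c₁). -/
/-- Two points of `ℤⁿ` are `c_u`-adjacent: they are distinct, differ by at most 1 in each
coordinate, and differ in at most `u` coordinates. -/
def adjN (n u : ℕ) (x y : Fin n → ℤ) : Prop :=
  x ≠ y ∧ (∀ i, |x i - y i| ≤ 1) ∧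
    (Finset.univ.filter fun i => x i ≠ y i).card ≤ u

/-- `f` is `c_u`-continuous on `X ⊆ ℤⁿ`. -/
def DigContinuousN (n u : ℕ) (X : Set (Fin n → ℤ)) (f : (Fin n → ℤ) → Fin n → ℤ) : Prop :=
  ∀ x ∈ X, ∀ y ∈ X, adjN n u x y → f x = f y ∨ adjN n u (f x) (f y)

/-- `A` is a freezing set for `(X, c_u)`: every `c_u`-continuous self-map of `X`
fixing `A` pointwise is the identity on `X`. -/
def FreezingSetN (n u : ℕ) (X A : Set (Fin n → ℤ)) : Prop :=
  A ⊆ X ∧ ∀ f : (Fin n → ℤ) → Fin n → ℤ, Set.MapsTo f X X → DigContinuousN n u X f →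
    (∀ a ∈ A, f a = a) → ∀ x ∈ X, f x = x

/-- `A` is a minimal freezing set for `(X, c_u)`. -/
def MinFreezingSetN (n u : ℕ) (X A : Set (Fin n → ℤ)) : Prop :=
  FreezingSetN n u X A ∧ ∀ A' ⊂ A, ¬ FreezingSetN n u X A'

/-- `q` is a close `c_u`-neighbor of `p` in `X`. -/
def CloseNbrN (n u : ℕ) (X : Set (Fin n → ℤ)) (p q : Fin n → ℤ) : Prop :=
  p ∈ X ∧ q ∈ X ∧ p ≠ q ∧ ∀ x ∈ X, adjN n u x p → x = q ∨ adjN n u x q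

/-- A `c_u`-path of length `k` in `Y` from `a` to `b`. -/
def IsPathInN (n u : ℕ) (Y : Set (Fin n → ℤ)) (k : ℕ) (s : Fin (k + 1) → Fin n → ℤ)
    (a b : Fin n → ℤ) : Prop :=
  (∀ i, s i ∈ Y) ∧ s 0 = a ∧ s (Fin.last k) = b ∧
    ∀ i : Fin k, s i.castSucc = s i.succ ∨ adjN n u (s i.castSucc) (s i.succ)

instance adjN.dec (n u : ℕ) (x y : Fin n → ℤ) : Decidable (adjN n u x y) := by
  unfold adjN; infer_instance

abbrev Cube : Set (Fin 3 → ℤ) := {p : Fin 3 → ℤ | ∀ i, p i = 0 ∨ p i = 1}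

lemma mem_cube_cases (p : Fin 3 → ℤ) (hp : p ∈ Cube) :
    p = ![0,0,0] ∨ p = ![0,0,1] ∨ p = ![0,1,0] ∨ p = ![0,1,1] ∨
    p = ![1,0,0] ∨ p = ![1,0,1] ∨ p = ![1,1,0] ∨ p = ![1,1,1] := by
  have he : p = ![p 0, p 1, p 2] := by
    funext i; fin_cases i <;> rfl
  rcases hp 0 with h0 | h0 <;> rcases hp 1 with h1 | h1 <;> rcases hp 2 with h2 | h2 <;>
    rw [h0, h1, h2] at he <;> tauto

lemma odd_case (f : (Fin 3 → ℤ) → Fin 3 → ℤ) (hmap : Set.MapsTo f Cube Cube)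
    (hcont : DigContinuousN 3 1 Cube f) (p a b c : Fin 3 → ℤ)
    (hp : p ∈ Cube) (haX : a ∈ Cube) (hbX : b ∈ Cube) (hcX : c ∈ Cube)
    (hpa : adjN 3 1 p a) (hpb : adjN 3 1 p b) (hpc : adjN 3 1 p c)
    (hfa : f a = a) (hfb : f b = b) (hfc : f c = c)
    (huniq : ∀ q, q ∈ Cube → (q = a ∨ adjN 3 1 q a) → (q = b ∨ adjN 3 1 q b) →
      (q = c ∨ adjN 3 1 q c) → q = p) : f p = p := by
  have h1 := hcont p hp a haX hpa
  have h2 := hcont p hp b hbX hpb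
  have h3 := hcont p hp c hcX hpc
  rw [hfa] at h1; rw [hfb] at h2; rw [hfc] at h3
  exact huniq (f p) (hmap hp) h1 h2 h3

def mv (a b c d : Fin 3 → ℤ) : (Fin 3 → ℤ) → (Fin 3 → ℤ) :=
  fun p => if p = a then b else if p = c then d else p

lemma min_case (A' : Set (Fin 3 → ℤ)) (y y' t t' : Fin 3 → ℤ)
    (hyA' : y ∉ A') (hsub : A' ⊆ {![0, 0, 0], ![0, 1, 1], ![1, 0, 1], ![1, 1, 0]})
    (hyY : y ∈ Cube)
    (hmaps : Set.MapsTo (mv y t y' t') Cube Cube)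
    (hcont : DigContinuousN 3 1 Cube (mv y t y' t'))
    (hfix : ∀ a ∈ ({![0, 0, 0], ![0, 1, 1], ![1, 0, 1], ![1, 1, 0]} : Set (Fin 3 → ℤ)),
      a ≠ y → mv y t y' t' a = a)
    (hne : t ≠ y) :
    ¬ FreezingSetN 3 1 Cube A' := by
  rintro ⟨-, hfr⟩
  have := hfr (mv y t y' t') hmaps hcont
    (fun a ha => hfix a (hsub ha) (by rintro rfl; exact hyA' ha)) y hyY
  rw [mv, if_pos rfl] at this
  exact hne this


/-- `A = {(0,0,0), (0,1,1), (1,0,1), (1,1,0)}` is a minimal freezing set for the unit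
3-cube `X = {0,1}³` with the `c₁` adjacency. -/
theorem cube_minimal_freezing :
    MinFreezingSetN 3 1 {p : Fin 3 → ℤ | ∀ i, p i = 0 ∨ p i = 1}
      {![0, 0, 0], ![0, 1, 1], ![1, 0, 1], ![1, 1, 0]} := by
  constructor
  · constructor
    · intro a ha
      simp only [Set.mem_insert_iff, Set.mem_singleton_iff] at ha
      rcases ha with rfl | rfl | rfl | rfl <;> decide
    · intro f hmap hcont hfix x hx
      have h000 : f ![0,0,0] = ![0,0,0] := hfix _ (by simp)
      have h011 : f ![0,1,1] = ![0,1,1] := hfix _ (by simp)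
      have h101 : f ![1,0,1] = ![1,0,1] := hfix _ (by simp)
      have h110 : f ![1,1,0] = ![1,1,0] := hfix _ (by simp)
      rcases mem_cube_cases x hx with rfl|rfl|rfl|rfl|rfl|rfl|rfl|rfl
      · exact h000
      · -- 001
        refine odd_case f hmap hcont _ ![0,0,0] ![0,1,1] ![1,0,1] (by decide) (by decide)
          (by decide) (by decide) (by decide) (by decide) (by decide) h000 h011 h101 ?_
        intro q hq c1 c2 c3
        rcases mem_cube_cases q hq with rfl|rfl|rfl|rfl|rfl|rfl|rfl|rfl <;>
          (first
            | rfl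
            | exact absurd c1 (by decide)
            | exact absurd c2 (by decide)
            | exact absurd c3 (by decide))
      · -- 010
        refine odd_case f hmap hcont _ ![0,0,0] ![0,1,1] ![1,1,0] (by decide) (by decide)
          (by decide) (by decide) (by decide) (by decide) (by decide) h000 h011 h110 ?_
        intro q hq c1 c2 c3
        rcases mem_cube_cases q hq with rfl|rfl|rfl|rfl|rfl|rfl|rfl|rfl <;>
          (first
            | rfl
            | exact absurd c1 (by decide)
            | exact absurd c2 (by decide)
            | exact absurd c3 (by decide))
      · exact h011
      · -- 100
        refine odd_case f hmap hcont _ ![0,0,0] ![1,0,1] ![1,1,0] (by decide) (by decide)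
          (by decide) (by decide) (by decide) (by decide) (by decide) h000 h101 h110 ?_
        intro q hq c1 c2 c3
        rcases mem_cube_cases q hq with rfl|rfl|rfl|rfl|rfl|rfl|rfl|rfl <;>
          (first
            | rfl
            | exact absurd c1 (by decide)
            | exact absurd c2 (by decide)
            | exact absurd c3 (by decide))
      · exact h101
      · exact h110
      · -- 111
        refine odd_case f hmap hcont _ ![0,1,1] ![1,0,1] ![1,1,0] (by decide) (by decide)
          (by decide) (by decide) (by decide) (by decide) (by decide) h011 h101 h110 ?_
        intro q hq c1 c2 c3
        rcases mem_cube_cases q hq with rfl|rfl|rfl|rfl|rfl|rfl|rfl|rfl <;>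
          (first
            | rfl
            | exact absurd c1 (by decide)
            | exact absurd c2 (by decide)
            | exact absurd c3 (by decide))
  · intro A' hA'
    obtain ⟨a, haA, haA'⟩ := Set.exists_of_ssubset hA'
    have hsub := hA'.subset
    simp only [Set.mem_insert_iff, Set.mem_singleton_iff] at haA
    have cont_of : ∀ y t y' t' : Fin 3 → ℤ,
        (∀ x, x ∈ Cube → ∀ z, z ∈ Cube → adjN 3 1 x z →
          mv y t y' t' x = mv y t y' t' z ∨ adjN 3 1 (mv y t y' t' x) (mv y t y' t' z)) →
        DigContinuousN 3 1 Cube (mv y t y' t') := fun _ _ _ _ h => h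
    rcases haA with rfl | rfl | rfl | rfl
    · -- missing 000 : move 000 ↦ 011, 100 ↦ 111
      refine min_case A' ![0,0,0] ![1,0,0] ![0,1,1] ![1,1,1] haA' hsub (by decide) ?_ ?_ ?_
        (by decide)
      · intro x hx
        rcases mem_cube_cases x hx with rfl|rfl|rfl|rfl|rfl|rfl|rfl|rfl <;> decide
      · intro x hx z hz h
        rcases mem_cube_cases x hx with rfl|rfl|rfl|rfl|rfl|rfl|rfl|rfl <;>
          rcases mem_cube_cases z hz with rfl|rfl|rfl|rfl|rfl|rfl|rfl|rfl <;> revert h <;> decide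
      · intro b hb hne
        simp only [Set.mem_insert_iff, Set.mem_singleton_iff] at hb
        rcases hb with rfl | rfl | rfl | rfl
        · exact absurd rfl hne
        all_goals decide
    · -- missing 011 : move 011 ↦ 000, 111 ↦ 100
      refine min_case A' ![0,1,1] ![1,1,1] ![0,0,0] ![1,0,0] haA' hsub (by decide) ?_ ?_ ?_
        (by decide)
      · intro x hx
        rcases mem_cube_cases x hx with rfl|rfl|rfl|rfl|rfl|rfl|rfl|rfl <;> decide
      · intro x hx z hz h
        rcases mem_cube_cases x hx with rfl|rfl|rfl|rfl|rfl|rfl|rfl|rfl <;>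
          rcases mem_cube_cases z hz with rfl|rfl|rfl|rfl|rfl|rfl|rfl|rfl <;> revert h <;> decide
      · intro b hb hne
        simp only [Set.mem_insert_iff, Set.mem_singleton_iff] at hb
        rcases hb with rfl | rfl | rfl | rfl
        · decide
        · exact absurd rfl hne
        all_goals decide
    · -- missing 101 : move 101 ↦ 110, 001 ↦ 010
      refine min_case A' ![1,0,1] ![0,0,1] ![1,1,0] ![0,1,0] haA' hsub (by decide) ?_ ?_ ?_
        (by decide)
      · intro x hx
        rcases mem_cube_cases x hx with rfl|rfl|rfl|rfl|rfl|rfl|rfl|rfl <;> decide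
      · intro x hx z hz h
        rcases mem_cube_cases x hx with rfl|rfl|rfl|rfl|rfl|rfl|rfl|rfl <;>
          rcases mem_cube_cases z hz with rfl|rfl|rfl|rfl|rfl|rfl|rfl|rfl <;> revert h <;> decide
      · intro b hb hne
        simp only [Set.mem_insert_iff, Set.mem_singleton_iff] at hb
        rcases hb with rfl | rfl | rfl | rfl
        · decide
        · decide
        · exact absurd rfl hne
        · decide
    · -- missing 110 : move 110 ↦ 101, 010 ↦ 001
      refine min_case A' ![1,1,0] ![0,1,0] ![1,0,1] ![0,0,1] haA' hsub (by decide) ?_ ?_ ?_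
        (by decide)
      · intro x hx
        rcases mem_cube_cases x hx with rfl|rfl|rfl|rfl|rfl|rfl|rfl|rfl <;> decide
      · intro x hx z hz h
        rcases mem_cube_cases x hx with rfl|rfl|rfl|rfl|rfl|rfl|rfl|rfl <;>
          rcases mem_cube_cases z hz with rfl|rfl|rfl|rfl|rfl|rfl|rfl|rfl <;> revert h <;> decide
      · intro b hb hne
        simp only [Set.mem_insert_iff, Set.mem_singleton_iff] at hb
        rcases hb with rfl | rfl | rfl | rfl
        · decide
        · decide
        · decide
        · exact absurd rfl hne
end

section
/- Let X ⊆ ℤ^n, 1 ≤ u ≤ n, let q, q′ ∈ X be c_u-adjacent, let f : X → X be c_u-continuous, and let p_i denote the i-th coordinate projection. (1) If p_i(f(q)) > p_i(q) > p_i(q′), then p_i(f(q′)) > p_i(q′). (2) If p_i(f(q)) < p_i(q) < p_i(q′), then p_i(f(q′)) < p_i(q′). -/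
/-- Pulling lemma: let `q, q' ∈ X ⊆ ℤⁿ` be `c_u`-adjacent and `f : X → X` be
`c_u`-continuous. (1) If `pᵢ(f q) > pᵢ q > pᵢ q'` then `pᵢ(f q') > pᵢ q'`.
(2) If `pᵢ(f q) < pᵢ q < pᵢ q'` then `pᵢ(f q') < pᵢ q'`. -/
theorem pulling (n u : ℕ) (hu1 : 1 ≤ u) (hun : u ≤ n)
    (X : Set (Fin n → ℤ)) (q q' : Fin n → ℤ) (hq : q ∈ X) (hq' : q' ∈ X)
    (hadj : adjN n u q q')
    (f : (Fin n → ℤ) → Fin n → ℤ) (hmaps : Set.MapsTo f X X)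
    (hcont : DigContinuousN n u X f) (i : Fin n) :
    (f q i > q i → q i > q' i → f q' i > q' i) ∧
      (f q i < q i → q i < q' i → f q' i < q' i) := by
  have hqi := hadj.2.1 i
  have key : |f q i - f q' i| ≤ 1 := by
    rcases hcont q hq q' hq' hadj with h | h
    · simp [h]
    · exact h.2.1 i
  rw [abs_le] at hqi key
  constructor <;> intro h1 h2 <;> omega
end

section
/- Let X ⊆ ℤ^n and 1 ≤ u ≤ n. Let p, q ∈ X with p ≠ q be such that q is a close c_u-neighbor of p. Then p belongs to every freezing set of (X, c_u). -/
theorem adjN_symm {n u : ℕ} {x y : Fin n → ℤ} (h : adjN n u x y) : adjN n u y x := by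
  obtain ⟨h1, h2, h3⟩ := h
  refine ⟨h1.symm, fun i => by rw [abs_sub_comm]; exact h2 i, ?_⟩
  convert h3 using 2
  ext i
  simp [ne_comm]

/-- If `q` is a close `c_u`-neighbor of `p` in `X ⊆ ℤⁿ`, then `p` belongs to every
freezing set of `(X, c_u)`. -/
theorem close_nbr_mem_freezing (n u : ℕ) (hu1 : 1 ≤ u) (hun : u ≤ n)
    (X : Set (Fin n → ℤ)) (p q : Fin n → ℤ) (hpq : p ≠ q)
    (h : CloseNbrN n u X p q) :
    ∀ A : Set (Fin n → ℤ), FreezingSetN n u X A → p ∈ A := by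
  intro A hA
  by_contra hpA
  obtain ⟨hpX, hqX, _, hclose⟩ := h
  set f : (Fin n → ℤ) → Fin n → ℤ := fun x => if x = p then q else x with hf
  have hfp : f p = q := by simp [hf]
  have hfnot : ∀ x, x ≠ p → f x = x := fun x hx => by simp [hf, hx]
  have hmaps : Set.MapsTo f X X := by
    intro x hx
    by_cases hxp : x = p
    · rw [hxp, hfp]; exact hqX
    · rw [hfnot x hxp]; exact hx
  have hcont : DigContinuousN n u X f := by
    intro x hx y hy hadj
    by_cases hxp : x = p
    · have hyp : y ≠ p := fun hyy => hadj.1 (hxp.trans hyy.symm)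
      rw [hxp, hfp, hfnot y hyp]
      rcases hclose y hy (hxp ▸ adjN_symm hadj) with hyq | hadjq
      · left; exact hyq.symm
      · right; exact adjN_symm hadjq
    · by_cases hyp : y = p
      · rw [hyp, hfp, hfnot x hxp]
        rcases hclose x hx (hyp ▸ hadj) with hxq | hadjq
        · left; exact hxq
        · right; exact hadjq
      · rw [hfnot x hxp, hfnot y hyp]; right; exact hadj
  have hfix : ∀ a ∈ A, f a = a := by
    intro a ha
    exact hfnot a (fun hap => hpA (hap ▸ ha))
  have := hA.2 f hmaps hcont hfix p hpX
  rw [hfp] at this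
  exact hpq this.symm
end
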